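/- arXiv:0812.3485 — 7 statements merged into one kernel-verified Lean document; each statement's English description precedes it below -/
import Mathlib

section
/- Let (Z₁,Z₂) be a random vector with values in (0,∞)² and let μ be a boundedly finite Borel measure on E = [0,∞)² ∖ {(0,0)} such that for every Borel set B ⊆ E with inf{max(z₁,z₂) : z ∈ B} > 0 and μ(∂B) = 0 one has lim_{s→∞} s·Pr[(Z₁/s, Z₂/s) ∈ B] = μ(B). Then μ is homogeneous of degree −1, that is, μ(cB) = c⁻¹μ(B) for every Borel set B ⊆ E and every c ∈ (0,∞). -/
open MeasureTheory Set Real Filter Topology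
open scoped ENNReal Pointwise

noncomputable section

/-- The cone `E = [0,∞)² \ {(0,0)}` as a subset of `ℝ²`. -/
def Econe : Set (ℝ × ℝ) := (Ici 0 ×ˢ Ici 0) \ {((0 : ℝ), (0 : ℝ))}

/-- The topological boundary of `B` computed inside the subspace `E`:
the closure of `B` within `E` minus the interior of `B` within `E`. -/
def frontierInE (B : Set (ℝ × ℝ)) : Set (ℝ × ℝ) :=
  (closure B ∩ Econe) \ {z | B ∈ 𝓝[Econe] z}

/-! ### Auxiliary material -/

lemma measurableSet_Econe : MeasurableSet Econe :=
  (measurableSet_Ici.prod measurableSet_Ici).diff (measurableSet_singleton _)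

lemma mem_Econe {z : ℝ × ℝ} : z ∈ Econe ↔ (0 ≤ z.1 ∧ 0 ≤ z.2) ∧ z ≠ ((0:ℝ), (0:ℝ)) :=
  Iff.rfl

lemma Econe_max_pos {z : ℝ × ℝ} (hz : z ∈ Econe) : 0 < max z.1 z.2 := by
  rw [mem_Econe] at hz
  rcases hz with ⟨⟨h1, h2⟩, hne⟩
  rcases lt_or_eq_of_le h1 with h | h
  · exact lt_max_of_lt_left h
  rcases lt_or_eq_of_le h2 with h' | h'
  · exact lt_max_of_lt_right h'
  exact absurd (Prod.ext h.symm h'.symm) hne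

lemma smul_mem_Econe {t : ℝ} {z : ℝ × ℝ} (ht : 0 < t) (hz : z ∈ Econe) : t • z ∈ Econe := by
  rw [mem_Econe] at hz ⊢
  rcases hz with ⟨⟨h1, h2⟩, hne⟩
  refine ⟨⟨mul_nonneg ht.le h1, mul_nonneg ht.le h2⟩, ?_⟩
  intro h
  apply hne
  have h1' : t * z.1 = 0 := congrArg Prod.fst h
  have h2' : t * z.2 = 0 := congrArg Prod.snd h
  have e1 : z.1 = 0 := by
    rcases mul_eq_zero.1 h1' with h | h
    · exact absurd h ht.ne'
    · exact h
  have e2 : z.2 = 0 := by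
    rcases mul_eq_zero.1 h2' with h | h
    · exact absurd h ht.ne'
    · exact h
  exact Prod.ext e1 e2

lemma smul_mem_Econe_iff {t : ℝ} {z : ℝ × ℝ} (ht : 0 < t) : t • z ∈ Econe ↔ z ∈ Econe := by
  constructor
  · intro h
    have := smul_mem_Econe (t := t⁻¹) (inv_pos.2 ht) h
    rwa [smul_smul, inv_mul_cancel₀ ht.ne', one_smul] at this
  · exact smul_mem_Econe ht

/-- The basic sets: open upper-right quadrants intersected with the cone. -/
def Srect (a b : ℝ) : Set (ℝ × ℝ) := (Ioi a ×ˢ Ioi b) ∩ Econe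

lemma measurableSet_Srect (a b : ℝ) : MeasurableSet (Srect a b) :=
  (measurableSet_Ioi.prod measurableSet_Ioi).inter measurableSet_Econe

lemma Srect_subset_Econe (a b : ℝ) : Srect a b ⊆ Econe := inter_subset_right

lemma mem_Srect {a b : ℝ} {z : ℝ × ℝ} :
    z ∈ Srect a b ↔ (a < z.1 ∧ b < z.2) ∧ z ∈ Econe := by
  simp [Srect, Set.mem_prod, and_assoc]

lemma Srect_inter (a b a' b' : ℝ) :
    Srect a b ∩ Srect a' b' = Srect (a ⊔ a') (b ⊔ b') := by
  ext z
  simp only [mem_Srect, mem_inter_iff, sup_lt_iff, max_lt_iff]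
  tauto

lemma rect_inter_Srect (a b p q : ℝ) :
    (Ioi a ×ˢ Ioi b) ∩ Srect p q = Srect (a ⊔ p) (b ⊔ q) := by
  ext z
  simp only [mem_Srect, mem_inter_iff, Set.mem_prod, mem_Ioi, max_lt_iff, sup_lt_iff]
  tauto

lemma Srect_bounded_away {a b : ℝ} (h : 0 < max a b) :
    ∀ z ∈ Srect a b, max a b ≤ max z.1 z.2 := by
  intro z hz
  rw [mem_Srect] at hz
  exact max_le (le_max_of_le_left hz.1.1.le) (le_max_of_le_right hz.1.2.le)

lemma smul_Srect {c : ℝ} (hc : 0 < c) (a b : ℝ) :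
    c • Srect a b = Srect (c * a) (c * b) := by
  ext z
  rw [mem_smul_set_iff_inv_smul_mem₀ hc.ne', mem_Srect, mem_Srect]
  have hz : c⁻¹ • z ∈ Econe ↔ z ∈ Econe := smul_mem_Econe_iff (inv_pos.2 hc)
  have h1 : a < (c⁻¹ • z).1 ↔ c * a < z.1 := by
    show a < c⁻¹ * z.1 ↔ _
    rw [inv_mul_eq_div, lt_div_iff₀ hc, mul_comm]
  have h2 : b < (c⁻¹ • z).2 ↔ c * b < z.2 := by
    show b < c⁻¹ * z.2 ↔ _
    rw [inv_mul_eq_div, lt_div_iff₀ hc, mul_comm]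
  rw [h1, h2, hz]

/-- vertical line piece in the cone -/
def vlineE (x : ℝ) : Set (ℝ × ℝ) := {p | p.1 = x} ∩ Econe

/-- horizontal line piece in the cone -/
def hlineE (x : ℝ) : Set (ℝ × ℝ) := {p | p.2 = x} ∩ Econe

lemma measurableSet_vlineE (x : ℝ) : MeasurableSet (vlineE x) :=
  (measurable_fst (measurableSet_singleton x)).inter measurableSet_Econe

lemma measurableSet_hlineE (x : ℝ) : MeasurableSet (hlineE x) :=
  (measurable_snd (measurableSet_singleton x)).inter measurableSet_Econe

lemma frontierInE_Srect_subset (a b : ℝ) :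
    frontierInE (Srect a b) ⊆ vlineE a ∪ hlineE b := by
  rintro z ⟨⟨hcl, hzE⟩, hnot⟩
  by_contra h
  simp only [mem_union, not_or] at h
  rcases h with ⟨hv, hh⟩
  have hza : z.1 ≠ a := fun e => hv ⟨e, hzE⟩
  have hzb : z.2 ≠ b := fun e => hh ⟨e, hzE⟩
  have hcl' : z ∈ Ici a ×ˢ Ici b := by
    have : closure (Srect a b) ⊆ closure (Ioi a ×ˢ Ioi b) :=
      closure_mono inter_subset_left
    have h2 := this hcl
    rwa [closure_prod_eq, closure_Ioi, closure_Ioi] at h2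
  have h1 : a < z.1 := lt_of_le_of_ne hcl'.1 (Ne.symm hza)
  have h2 : b < z.2 := lt_of_le_of_ne hcl'.2 (Ne.symm hzb)
  apply hnot
  show Srect a b ∈ 𝓝[Econe] z
  rw [mem_nhdsWithin]
  exact ⟨Ioi a ×ˢ Ioi b, isOpen_Ioi.prod isOpen_Ioi, ⟨h1, h2⟩, fun w hw => hw⟩

/-- A set `G ⊆ ℝ` which has points just above every real generates the Borel σ-algebra via
the rays `Ioi`. -/
lemma generateFrom_Ioi_eq (G : Set ℝ)
    (hdense : ∀ a : ℝ, ∀ δ > (0:ℝ), ∃ x ∈ G, a < x ∧ x < a + δ) :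
    MeasurableSpace.generateFrom (Ioi '' G) = Real.measurableSpace := by
  apply le_antisymm
  · apply MeasurableSpace.generateFrom_le
    rintro _ ⟨a, -, rfl⟩
    exact measurableSet_Ioi
  · have hb : (Real.measurableSpace : MeasurableSpace ℝ) = borel ℝ := rfl
    rw [hb, borel_eq_generateFrom_Ioi]
    apply MeasurableSpace.generateFrom_le
    rintro _ ⟨a, rfl⟩
    have hseq : ∀ n : ℕ, ∃ x ∈ G, a < x ∧ x < a + 1 / (n + 1) := by
      intro n
      exact hdense a (1 / (n + 1)) (by positivity)
    choose x hxG hax hx using hseq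
    have : Ioi a = ⋃ n : ℕ, Ioi (x n) := by
      ext y
      simp only [mem_Ioi, mem_iUnion]
      constructor
      · intro hy
        obtain ⟨n, hn⟩ := exists_nat_one_div_lt (sub_pos.2 hy)
        exact ⟨n, (hx n).trans (by linarith)⟩
      · rintro ⟨n, hn⟩
        exact (hax n).trans hn
    rw [this]
    exact MeasurableSet.iUnion fun n =>
      MeasurableSpace.measurableSet_generateFrom ⟨x n, hxG n, rfl⟩

theorem stmt0 {Ω : Type*} [MeasurableSpace Ω] (P : Measure Ω) [IsProbabilityMeasure P]
    (Z : Ω → ℝ × ℝ) (hZmeas : Measurable Z)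
    (hZpos : ∀ ω, 0 < (Z ω).1 ∧ 0 < (Z ω).2)
    (μ : Measure (ℝ × ℝ)) (hμE : μ Econeᶜ = 0)
    (hbf : ∀ ε > (0 : ℝ), μ {z | z ∈ Econe ∧ ε ≤ max z.1 z.2} < ⊤)
    (hconv : ∀ B : Set (ℝ × ℝ), MeasurableSet B → B ⊆ Econe →
      (∃ δ > (0 : ℝ), ∀ z ∈ B, δ ≤ max z.1 z.2) →
      μ (frontierInE B) = 0 →
      Tendsto (fun s : ℝ => ENNReal.ofReal s * P {ω | ((Z ω).1 / s, (Z ω).2 / s) ∈ B})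
        atTop (𝓝 (μ B))) :
    ∀ B : Set (ℝ × ℝ), MeasurableSet B → B ⊆ Econe → ∀ c > (0 : ℝ),
      μ (c • B) = ENNReal.ofReal c⁻¹ * μ B := by
  intro B hB hBE c hc
  -- the measurable sets `{max ≥ ε}` used for σ-finiteness and finiteness bounds
  have hEset_meas : ∀ ε : ℝ, MeasurableSet {z : ℝ × ℝ | z ∈ Econe ∧ ε ≤ max z.1 z.2} := by
    intro ε
    exact measurableSet_Econe.inter
      (measurableSet_le measurable_const (measurable_fst.max measurable_snd))
  -- σ-finiteness of μ
  haveI : SigmaFinite μ := by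
    constructor
    constructor
    refine ⟨fun n => Econeᶜ ∪ {z : ℝ × ℝ | z ∈ Econe ∧ 1 / (n + 1) ≤ max z.1 z.2},
      fun n => trivial, fun n => ?_, ?_⟩
    · calc μ _ ≤ μ Econeᶜ + μ {z : ℝ × ℝ | z ∈ Econe ∧ 1 / (n + 1) ≤ max z.1 z.2} :=
          measure_union_le _ _
      _ < ⊤ := by
          rw [hμE, zero_add]
          exact hbf _ (by positivity)
    · ext z
      simp only [mem_iUnion, mem_union, mem_compl_iff, mem_setOf_eq, mem_univ, iff_true]
      by_cases hz : z ∈ Econe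
      · obtain ⟨n, hn⟩ := exists_nat_one_div_lt (Econe_max_pos hz)
        exact ⟨n, Or.inr ⟨hz, hn.le⟩⟩
      · exact ⟨0, Or.inl hz⟩
  -- the good set
  set good : ℝ → Prop := fun x => x < 0 ∨ (μ (vlineE x) = 0 ∧ μ (hlineE x) = 0) with hgood_def
  set G : Set ℝ := {x | good x ∧ good (c * x)} with hG_def
  have hgood_neg : ∀ x : ℝ, x < 0 → good x := fun x hx => Or.inl hx
  have hG_neg : ∀ x : ℝ, x < 0 → x ∈ G := by
    intro x hx
    exact ⟨hgood_neg x hx, hgood_neg _ (mul_neg_of_pos_of_neg hc hx)⟩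
  have hgood_max : ∀ x y : ℝ, good x → good y → good (max x y) := by
    intro x y hx hy
    rcases max_cases x y with ⟨h, -⟩ | ⟨h, -⟩ <;> rw [h] <;> assumption
  have hG_max : ∀ x ∈ G, ∀ y ∈ G, x ⊔ y ∈ G := by
    intro x hx y hy
    refine ⟨hgood_max _ _ hx.1 hy.1, ?_⟩
    have : c * (x ⊔ y) = (c * x) ⊔ (c * y) := by
      rcases max_cases x y with ⟨h, h'⟩ | ⟨h, h'⟩
      · rw [h, max_eq_left (by nlinarith)]
      · rw [h, max_eq_right (by nlinarith)]
    rw [this]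
    exact hgood_max _ _ hx.2 hy.2
  -- the bad set is countable
  have hbad : {x : ℝ | ¬ good x}.Countable := by
    have h1 : {x : ℝ | 0 < μ (vlineE x)}.Countable := by
      apply Measure.countable_meas_pos_of_disjoint_iUnion (μ := μ)
        (As := fun x : ℝ => vlineE x) (fun x => measurableSet_vlineE x)
      intro x y hxy
      simp only [Function.onFun, Set.disjoint_left]
      rintro z ⟨hz1, -⟩ ⟨hz2, -⟩
      exact hxy (hz1.symm.trans hz2)
    have h2 : {x : ℝ | 0 < μ (hlineE x)}.Countable := by
      apply Measure.countable_meas_pos_of_disjoint_iUnion (μ := μ)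
        (As := fun x : ℝ => hlineE x) (fun x => measurableSet_hlineE x)
      intro x y hxy
      simp only [Function.onFun, Set.disjoint_left]
      rintro z ⟨hz1, -⟩ ⟨hz2, -⟩
      exact hxy (hz1.symm.trans hz2)
    apply Set.Countable.mono _ (h1.union h2)
    intro x hx
    simp only [hgood_def, mem_setOf_eq, not_or, not_and_or] at hx
    rcases hx.2 with h | h
    · exact Or.inl (pos_iff_ne_zero.2 h)
    · exact Or.inr (pos_iff_ne_zero.2 h)
  have hbadG : {x : ℝ | x ∉ G}.Countable := by
    have : {x : ℝ | x ∉ G} ⊆ {x : ℝ | ¬ good x} ∪ (fun y => c⁻¹ * y) '' {x : ℝ | ¬ good x} := by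
      intro x hx
      simp only [hG_def, mem_setOf_eq, not_and_or] at hx
      rcases hx with h | h
      · exact Or.inl h
      · exact Or.inr ⟨c * x, h, by field_simp⟩
    exact Set.Countable.mono this (hbad.union (hbad.image _))
  -- density of G
  have hdense : ∀ a : ℝ, ∀ δ > (0:ℝ), ∃ x ∈ G, a < x ∧ x < a + δ := by
    intro a δ hδ
    by_cases ha : a < 0
    · obtain ⟨x, hx1, hx2⟩ := exists_between (show a < min (a + δ) 0 from
        lt_min (by linarith) ha)
      exact ⟨x, hG_neg x (hx2.trans_le (min_le_right _ _)),
        hx1, hx2.trans_le (min_le_left _ _)⟩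
    · push_neg at ha
      by_contra hcon
      push_neg at hcon
      have hsub : Ioo a (a + δ) ⊆ {x : ℝ | x ∉ G} := by
        intro x hx
        intro hxG
        exact absurd (hcon x hxG hx.1) (not_le.2 hx.2)
      have hcnt : (Ioo a (a + δ)).Countable := hbadG.mono hsub
      have := Cardinal.mk_Ioo_real (show a < a + δ by linarith)
      rw [← Cardinal.le_aleph0_iff_set_countable] at hcnt
      rw [this] at hcnt
      exact absurd hcnt (not_le.2 Cardinal.aleph0_lt_continuum)
  -- generation of the σ-algebra
  have h1d : MeasurableSpace.generateFrom (Ioi '' G) = Real.measurableSpace :=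
    generateFrom_Ioi_eq G hdense
  have hspan : IsCountablySpanning (Ioi '' G) := by
    have hseq : ∀ n : ℕ, ∃ x ∈ G, -(n+2:ℝ) < x ∧ x < -(n+2:ℝ) + 1 := by
      intro n
      exact hdense (-(n+2:ℝ)) 1 one_pos
    choose y hyG hy1 hy2 using hseq
    refine ⟨fun n => Ioi (y n), fun n => ⟨y n, hyG n, rfl⟩, ?_⟩
    ext t
    simp only [mem_iUnion, mem_Ioi, mem_univ, iff_true]
    obtain ⟨n, hn⟩ := exists_nat_gt (-t)
    refine ⟨n, ?_⟩
    have h2 := hy2 n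
    linarith
  set C : Set (Set (ℝ × ℝ)) := image2 (· ×ˢ ·) (Ioi '' G) (Ioi '' G) with hC_def
  have hgen : (Prod.instMeasurableSpace : MeasurableSpace (ℝ × ℝ)) =
      MeasurableSpace.generateFrom C :=
    (generateFrom_eq_prod h1d h1d hspan hspan).symm
  have hpi : IsPiSystem C := by
    rintro _ ⟨_, ⟨a, haG, rfl⟩, _, ⟨b, hbG, rfl⟩, rfl⟩ _
      ⟨_, ⟨a', haG', rfl⟩, _, ⟨b', hbG', rfl⟩, rfl⟩ -
    rw [prod_inter_prod, Ioi_inter_Ioi, Ioi_inter_Ioi]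
    exact ⟨Ioi (a ⊔ a'), ⟨a ⊔ a', hG_max a haG a' haG', rfl⟩,
      Ioi (b ⊔ b'), ⟨b ⊔ b', hG_max b hbG b' hbG', rfl⟩, rfl⟩
  -- key scaling lemma from the convergence hypothesis
  have hpre : ∀ A : Set (ℝ × ℝ), (fun z : ℝ × ℝ => c⁻¹ • z) ⁻¹' A = c • A := by
    intro A
    ext z
    rw [mem_preimage, mem_smul_set_iff_inv_smul_mem₀ hc.ne']
  have key : ∀ A : Set (ℝ × ℝ), MeasurableSet A → A ⊆ Econe →
      (∃ δ > (0:ℝ), ∀ z ∈ A, δ ≤ max z.1 z.2) →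
      μ (frontierInE A) = 0 → μ (frontierInE (c • A)) = 0 →
      μ (c • A) = ENNReal.ofReal c⁻¹ * μ A := by
    rintro A hA hAE ⟨δ, hδ, hδA⟩ hfr hfrc
    have hAc_meas : MeasurableSet (c • A) := by
      rw [← hpre]
      exact hA.preimage (measurable_const_smul _)
    have hAc_sub : c • A ⊆ Econe := by
      rintro _ ⟨w, hw, rfl⟩
      exact smul_mem_Econe hc (hAE hw)
    have hAc_away : ∃ δ' > (0:ℝ), ∀ z ∈ c • A, δ' ≤ max z.1 z.2 := by
      refine ⟨c * δ, by positivity, ?_⟩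
      rintro _ ⟨w, hw, rfl⟩
      show c * δ ≤ max (c • w).1 (c • w).2
      have hmax : max (c • w).1 (c • w).2 = c * max w.1 w.2 := by
        show max (c * w.1) (c * w.2) = _
        rcases max_cases w.1 w.2 with ⟨h, h'⟩ | ⟨h, h'⟩ <;>
          rcases max_cases (c * w.1) (c * w.2) with ⟨g, g'⟩ | ⟨g, g'⟩ <;>
            rw [g, h] <;> nlinarith
      rw [hmax]
      exact mul_le_mul_of_nonneg_left (hδA w hw) hc.le
    have h1 := hconv A hA hAE ⟨δ, hδ, hδA⟩ hfr
    have h2 := hconv (c • A) hAc_meas hAc_sub hAc_away hfrc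
    have hcs : Tendsto (fun s : ℝ => c * s) atTop atTop :=
      Tendsto.const_mul_atTop hc tendsto_id
    have h3 : Tendsto (fun s : ℝ => ENNReal.ofReal c⁻¹ *
        (ENNReal.ofReal (c * s) * P {ω | ((Z ω).1 / (c * s), (Z ω).2 / (c * s)) ∈ A}))
        atTop (𝓝 (ENNReal.ofReal c⁻¹ * μ A)) :=
      ENNReal.Tendsto.const_mul (h1.comp hcs) (Or.inr ENNReal.ofReal_ne_top)
    have heq : ∀ᶠ s : ℝ in atTop,
        ENNReal.ofReal c⁻¹ *
          (ENNReal.ofReal (c * s) * P {ω | ((Z ω).1 / (c * s), (Z ω).2 / (c * s)) ∈ A}) =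
        ENNReal.ofReal s * P {ω | ((Z ω).1 / s, (Z ω).2 / s) ∈ c • A} := by
      filter_upwards [eventually_ge_atTop (0:ℝ)] with s hs
      have hset : {ω | ((Z ω).1 / s, (Z ω).2 / s) ∈ c • A} =
          {ω | ((Z ω).1 / (c * s), (Z ω).2 / (c * s)) ∈ A} := by
        ext ω
        simp only [mem_setOf_eq]
        rw [mem_smul_set_iff_inv_smul_mem₀ hc.ne']
        have e1 : c⁻¹ • ((Z ω).1 / s, (Z ω).2 / s) =
            ((Z ω).1 / (c * s), (Z ω).2 / (c * s)) := by
          show (c⁻¹ * ((Z ω).1 / s), c⁻¹ * ((Z ω).2 / s)) = _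
          rw [inv_mul_eq_div, div_div, inv_mul_eq_div, div_div, mul_comm s c]
        rw [e1]
      rw [hset, ← mul_assoc, ← ENNReal.ofReal_mul (by positivity), inv_mul_cancel_left₀ hc.ne']
    exact (tendsto_nhds_unique h2 (h3.congr' heq)).trans rfl
  -- the scaling identity on good rectangles
  have keyS : ∀ a b : ℝ, a ∈ G → b ∈ G → 0 < max a b →
      μ (c • Srect a b) = ENNReal.ofReal c⁻¹ * μ (Srect a b) := by
    intro a b haG hbG hab
    have hnull : ∀ x y : ℝ, good x → good y → μ (frontierInE (Srect x y)) = 0 := by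
      intro x y hx hy
      apply measure_mono_null (frontierInE_Srect_subset x y)
      have hvx : μ (vlineE x) = 0 := by
        rcases hx with h | h
        · apply measure_mono_null _ hμE
          rintro p ⟨hp1, hpE⟩
          exact absurd (hp1 ▸ (mem_Econe.1 hpE).1.1) (not_le.2 h)
        · exact h.1
      have hhy : μ (hlineE y) = 0 := by
        rcases hy with h | h
        · apply measure_mono_null _ hμE
          rintro p ⟨hp2, hpE⟩
          exact absurd (hp2 ▸ (mem_Econe.1 hpE).1.2) (not_le.2 h)
        · exact h.2
      exact measure_union_null hvx hhy
    apply key (Srect a b) (measurableSet_Srect a b) (Srect_subset_Econe a b)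
      ⟨max a b, hab, Srect_bounded_away hab⟩ (hnull a b haG.1 hbG.1)
    rw [smul_Srect hc]
    exact hnull _ _ haG.2 hbG.2
  -- finiteness
  have hSfin : ∀ a b : ℝ, 0 < max a b → μ (Srect a b) ≠ ⊤ := by
    intro a b hab
    refine ne_top_of_le_ne_top (hbf (max a b) hab).ne ?_
    · apply measure_mono
      intro z hz
      exact ⟨(mem_Srect.1 hz).2, Srect_bounded_away hab z hz⟩
  -- the comparison measure
  set ν : Measure (ℝ × ℝ) :=
    (ENNReal.ofReal c) • Measure.map (fun z : ℝ × ℝ => c⁻¹ • z) μ with hν_def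
  have hν_apply : ∀ A : Set (ℝ × ℝ), MeasurableSet A → ν A = ENNReal.ofReal c * μ (c • A) := by
    intro A hA
    rw [hν_def, Measure.smul_apply, Measure.map_apply (measurable_const_smul _) hA, hpre,
      smul_eq_mul]
  have hνS : ∀ a b : ℝ, a ∈ G → b ∈ G → 0 < max a b → ν (Srect a b) = μ (Srect a b) := by
    intro a b haG hbG hab
    rw [hν_apply _ (measurableSet_Srect a b), keyS a b haG hbG hab, ← mul_assoc,
      ← ENNReal.ofReal_mul hc.le, mul_inv_cancel₀ hc.ne', ENNReal.ofReal_one, one_mul]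
  -- equality of μ and ν on unions of two good rectangles
  have hU : ∀ x y x' y' : ℝ, x ∈ G → y ∈ G → x' ∈ G → y' ∈ G →
      0 < max x y → 0 < max x' y' →
      μ (Srect x y ∪ Srect x' y') = ν (Srect x y ∪ Srect x' y') := by
    intro x y x' y' hx hy hx' hy' h1 h2
    have hmeas' : MeasurableSet (Srect x' y') := measurableSet_Srect x' y'
    have e1 := measure_union_add_inter (μ := μ) (Srect x y) hmeas'
    have e2 := measure_union_add_inter (μ := ν) (Srect x y) hmeas'
    rw [Srect_inter] at e1 e2
    have hxx : x ⊔ x' ∈ G := hG_max x hx x' hx'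
    have hyy : y ⊔ y' ∈ G := hG_max y hy y' hy'
    have h3 : 0 < max (x ⊔ x') (y ⊔ y') := by
      rcases lt_max_iff.1 h1 with h | h
      · exact lt_max_of_lt_left (lt_of_lt_of_le h le_sup_left)
      · exact lt_max_of_lt_right (lt_of_lt_of_le h le_sup_left)
    have hint : ν (Srect (x ⊔ x') (y ⊔ y')) = μ (Srect (x ⊔ x') (y ⊔ y')) :=
      hνS _ _ hxx hyy h3
    have hfin : μ (Srect (x ⊔ x') (y ⊔ y')) ≠ ⊤ := hSfin _ _ h3
    have hμν1 := hνS x y hx hy h1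
    have hμν2 := hνS x' y' hx' hy' h2
    have : μ (Srect x y ∪ Srect x' y') + μ (Srect (x ⊔ x') (y ⊔ y')) =
        ν (Srect x y ∪ Srect x' y') + μ (Srect (x ⊔ x') (y ⊔ y')) := by
      rw [e1]
      conv_rhs => rw [← hint]
      rw [e2, hμν1, hμν2]
    rw [add_comm (μ (Srect x y ∪ Srect x' y')), add_comm (ν (Srect x y ∪ Srect x' y'))] at this
    exact (ENNReal.add_right_inj hfin).1 this
  -- choice of the exhausting sequence
  have hpos : ∀ n : ℕ, ∃ x ∈ G, 0 < x ∧ x < 1 / (n + 1) := by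
    intro n
    obtain ⟨x, hxG, hx1, hx2⟩ := hdense 0 (1 / (n + 1)) (by positivity)
    exact ⟨x, hxG, hx1, by linarith⟩
  choose e heG he0 helt using hpos
  set f : ℕ → ℝ := fun n => Nat.rec (e 0) (fun m p => min p (e (m + 1))) n with hf_def
  have hf_succ : ∀ n, f (n + 1) = min (f n) (e (n + 1)) := fun n => rfl
  have hfG : ∀ n, f n ∈ G := by
    intro n
    induction n with
    | zero => exact heG 0
    | succ m ih =>
      rw [hf_succ]
      rcases min_cases (f m) (e (m + 1)) with ⟨h, -⟩ | ⟨h, -⟩ <;> rw [h]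
      · exact ih
      · exact heG (m + 1)
  have hf0 : ∀ n, 0 < f n := by
    intro n
    induction n with
    | zero => exact he0 0
    | succ m ih =>
      rw [hf_succ]
      exact lt_min ih (he0 (m + 1))
  have hfe : ∀ n, f n ≤ e n := by
    intro n
    cases n with
    | zero => exact le_refl _
    | succ m => rw [hf_succ]; exact min_le_right _ _
  have hfanti : ∀ n, f (n + 1) ≤ f n := fun n => by rw [hf_succ]; exact min_le_left _ _
  set K : ℕ → Set (ℝ × ℝ) := fun n => Srect (f n) (-1) ∪ Srect (-1) (f n) with hK_def
  have hKmono : Monotone K := by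
    apply monotone_nat_of_le_succ
    intro n
    apply union_subset_union
    · intro z hz
      rw [mem_Srect] at hz ⊢
      exact ⟨⟨lt_of_le_of_lt (hfanti n) hz.1.1, hz.1.2⟩, hz.2⟩
    · intro z hz
      rw [mem_Srect] at hz ⊢
      exact ⟨⟨hz.1.1, lt_of_le_of_lt (hfanti n) hz.1.2⟩, hz.2⟩
  have hKmeas : ∀ n, MeasurableSet (K n) :=
    fun n => (measurableSet_Srect _ _).union (measurableSet_Srect _ _)
  have hKsub : ∀ n, K n ⊆ {z : ℝ × ℝ | z ∈ Econe ∧ f n ≤ max z.1 z.2} := by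
    intro n z hz
    rcases hz with hz | hz
    · rw [mem_Srect] at hz
      exact ⟨hz.2, le_max_of_le_left hz.1.1.le⟩
    · rw [mem_Srect] at hz
      exact ⟨hz.2, le_max_of_le_right hz.1.2.le⟩
  have hKfin : ∀ n, μ (K n) ≠ ⊤ :=
    fun n => ne_top_of_le_ne_top (hbf (f n) (hf0 n)).ne (measure_mono (hKsub n))
  have hm1G : (-1 : ℝ) ∈ G := hG_neg (-1) (by norm_num)
  -- the restricted measures agree
  have hres : ∀ n, μ.restrict (K n) = ν.restrict (K n) := by
    intro n
    haveI : IsFiniteMeasure (μ.restrict (K n)) := by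
      constructor
      rw [Measure.restrict_apply_univ]
      exact lt_top_iff_ne_top.2 (hKfin n)
    have hmaxpos1 : 0 < max (f n) (-1 : ℝ) := lt_max_of_lt_left (hf0 n)
    have hmaxpos2 : 0 < max (-1 : ℝ) (f n) := lt_max_of_lt_right (hf0 n)
    have hKeq : μ (K n) = ν (K n) := hU (f n) (-1) (-1) (f n) (hfG n) hm1G hm1G (hfG n)
      hmaxpos1 hmaxpos2
    apply MeasureTheory.ext_of_generate_finite C hgen hpi
    · rintro _ ⟨_, ⟨a, haG, rfl⟩, _, ⟨b, hbG, rfl⟩, rfl⟩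
      have hsm : MeasurableSet (Ioi a ×ˢ Ioi b) := measurableSet_Ioi.prod measurableSet_Ioi
      rw [Measure.restrict_apply hsm, Measure.restrict_apply hsm]
      have hinter : (Ioi a ×ˢ Ioi b) ∩ K n =
          Srect (a ⊔ f n) (b ⊔ (-1)) ∪ Srect (a ⊔ (-1)) (b ⊔ f n) := by
        rw [hK_def, inter_union_distrib_left, rect_inter_Srect, rect_inter_Srect]
      rw [hinter]
      exact hU _ _ _ _ (hG_max a haG _ (hfG n)) (hG_max b hbG _ hm1G)
        (hG_max a haG _ hm1G) (hG_max b hbG _ (hfG n))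
        (lt_max_of_lt_left (lt_of_lt_of_le (hf0 n) le_sup_right))
        (lt_max_of_lt_right (lt_of_lt_of_le (hf0 n) le_sup_right))
    · rw [Measure.restrict_apply_univ, Measure.restrict_apply_univ]
      exact hKeq
  -- conclusion
  have hcover : Econe ⊆ ⋃ n, K n := by
    intro z hz
    obtain ⟨n, hn⟩ := exists_nat_one_div_lt (Econe_max_pos hz)
    have hfz : f n < max z.1 z.2 := lt_of_le_of_lt (hfe n) (lt_of_lt_of_le (helt n) hn.le)
    rw [mem_iUnion]
    have hz0 := (mem_Econe.1 hz).1
    rcases max_cases z.1 z.2 with ⟨h, -⟩ | ⟨h, -⟩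
    · exact ⟨n, Or.inl (mem_Srect.2 ⟨⟨h ▸ hfz, lt_of_lt_of_le (by norm_num) hz0.2⟩, hz⟩)⟩
    · exact ⟨n, Or.inr (mem_Srect.2 ⟨⟨lt_of_lt_of_le (by norm_num) hz0.1, h ▸ hfz⟩, hz⟩)⟩
  have hBcover : B = ⋃ n, B ∩ K n := by
    rw [← inter_iUnion, inter_eq_self_of_subset_left (hBE.trans hcover)]
  have hμB : μ B = ν B := by
    have hm : Monotone (fun n => B ∩ K n) := fun m n h => inter_subset_inter_right B (hKmono h)
    calc μ B = μ (⋃ n, B ∩ K n) := by rw [← hBcover]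
      _ = ⨆ n, μ (B ∩ K n) := hm.measure_iUnion
      _ = ⨆ n, ν (B ∩ K n) := by
          congr 1
          ext n
          rw [← Measure.restrict_apply hB, ← Measure.restrict_apply hB, hres n]
      _ = ν (⋃ n, B ∩ K n) := hm.measure_iUnion.symm
      _ = ν B := by rw [← hBcover]
  rw [hν_apply B hB] at hμB
  calc μ (c • B) = (ENNReal.ofReal c⁻¹ * ENNReal.ofReal c) * μ (c • B) := by
        rw [← ENNReal.ofReal_mul (by positivity), inv_mul_cancel₀ hc.ne', ENNReal.ofReal_one,
          one_mul]
    _ = ENNReal.ofReal c⁻¹ * (ENNReal.ofReal c * μ (c • B)) := by rw [mul_assoc]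
    _ = ENNReal.ofReal c⁻¹ * μ B := by rw [← hμB]
end
end

section
/- Let μ be a boundedly finite Borel measure on E = [0,∞)² ∖ {(0,0)} that is homogeneous of degree −1 and has standardized marginals, and suppose μ([1,∞)×[1,∞)) = 0 (tail independence). Then μ is concentrated on the coordinate axes, i.e. μ((0,∞)×(0,∞)) = 0, and for every norm ‖·‖ on ℝ² with ‖(1,0)‖ = 1 = ‖(0,1)‖ the spectral measure Φ of μ with respect to ‖·‖ satisfies Φ({0}) = 1, Φ({π/2}) = 1, and Φ((0,π/2)) = 0. -/
open MeasureTheory Set Real Filter Topology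
open scoped ENNReal Pointwise

noncomputable section

/-- The angular coordinate `θ(z) = arctan (z₁ / z₂)`, with `θ(z) = π/2` when `z₂ = 0`. -/
def ang (z : ℝ × ℝ) : ℝ := if z.2 = 0 then π / 2 else Real.arctan (z.1 / z.2)

/-!
Homogeneity carries the null square `[1,∞)²` to every square `[c,∞)²`, and these exhaust the open
quadrant, so `μ` lives on the axes. On the axes the angle is `0` or `π/2` and the norm is the
nonzero coordinate, so `Φ {0}` and `Φ {π/2}` are the marginal masses `μ {z₂ ≥ 1} = μ {z₁ ≥ 1} = 1`.
-/

lemma Ici_prod_Ici_eq_smul {c : ℝ} (hc : 0 < c) :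
    Ici c ×ˢ Ici c = c • (Ici (1 : ℝ) ×ˢ Ici (1 : ℝ)) := by
  rw [smul_set_prod, LinearOrderedField.smul_Ici hc, mul_one]

lemma Ici_one_prod_Ici_one_subset_Econe : Ici (1 : ℝ) ×ˢ Ici (1 : ℝ) ⊆ Econe := by
  rintro ⟨a, b⟩ ⟨ha, hb⟩
  simp only [mem_Ici] at ha hb
  refine ⟨⟨mem_Ici.2 (by linarith), mem_Ici.2 (by linarith)⟩, fun h => ?_⟩
  simp only [mem_singleton_iff, Prod.mk.injEq] at h
  linarith [h.1]

lemma measure_Ioi_prod_Ioi_eq_zero {μ : Measure (ℝ × ℝ)}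
    (h : ∀ c > (0 : ℝ), μ (Ici c ×ˢ Ici c) = 0) : μ (Ioi 0 ×ˢ Ioi 0) = 0 := by
  have hcover : Ioi (0 : ℝ) ×ˢ Ioi (0 : ℝ) ⊆
      ⋃ n : ℕ, Ici (1 / ((n : ℝ) + 1)) ×ˢ Ici (1 / ((n : ℝ) + 1)) := by
    rintro ⟨a, b⟩ ⟨ha : 0 < a, hb : 0 < b⟩
    obtain ⟨n, hn⟩ := exists_nat_one_div_lt (lt_min ha hb)
    exact mem_iUnion.2
      ⟨n, (hn.trans_le (min_le_left a b)).le, (hn.trans_le (min_le_right a b)).le⟩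
  exact measure_mono_null hcover (measure_iUnion_null fun n => h _ (by positivity))

lemma ang_eq_zero_iff (z : ℝ × ℝ) : ang z = 0 ↔ z.1 = 0 ∧ z.2 ≠ 0 := by
  by_cases h : z.2 = 0
  · simp [ang, h, pi_pos.ne']
  · simp [ang, h, arctan_eq_zero_iff]

lemma ang_eq_pi_div_two_iff (z : ℝ × ℝ) : ang z = π / 2 ↔ z.2 = 0 := by
  by_cases h : z.2 = 0
  · simp [ang, h]
  · simp [ang, h, (arctan_lt_pi_div_two _).ne]

lemma ang_mem_Ioo_iff (z : ℝ × ℝ) : ang z ∈ Ioo 0 (π / 2) ↔ 0 < z.1 / z.2 := by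
  by_cases h : z.2 = 0
  · simp [ang, h]
  · simp [ang, h, arctan_pos, arctan_lt_pi_div_two]

lemma apply_smul_eq_of_nonneg {N : ℝ × ℝ → ℝ} (hN : ∀ (c : ℝ) z, N (c • z) = |c| * N z)
    {v : ℝ × ℝ} (hv : N v = 1) {a : ℝ} (ha : 0 ≤ a) : N (a • v) = a := by
  rw [hN, hv, mul_one, abs_of_nonneg ha]

lemma axes_of_mem_Econe_of_notMem {z : ℝ × ℝ} (hz : z ∈ Econe) (hQ : z ∉ Ioi 0 ×ˢ Ioi 0) :
    (z.1 = 0 ∧ 0 < z.2) ∨ (0 < z.1 ∧ z.2 = 0) := by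
  obtain ⟨⟨h1, h2⟩, h0⟩ := hz
  simp only [mem_Ici] at h1 h2
  simp only [mem_prod, mem_Ioi, not_and_or, not_lt] at hQ
  simp only [mem_singleton_iff, Prod.ext_iff] at h0
  rcases hQ with h | h
  · exact .inl ⟨le_antisymm h h1, lt_of_le_of_ne h2 fun h' => h0 ⟨le_antisymm h h1, h'.symm⟩⟩
  · exact .inr ⟨lt_of_le_of_ne h1 fun h' => h0 ⟨h'.symm, le_antisymm h h2⟩, le_antisymm h h2⟩

lemma setOf_ang_eq_zero_sdiff {N : ℝ × ℝ → ℝ} (hN : ∀ b, 0 ≤ b → N (0, b) = b) :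
    {z | z ∈ Econe ∧ 1 ≤ N z ∧ ang z ∈ ({0} : Set ℝ)} \ Ioi 0 ×ˢ Ioi 0 =
      {w | w ∈ Econe ∧ 1 ≤ w.2} \ Ioi 0 ×ˢ Ioi 0 := by
  ext ⟨a, b⟩
  simp only [Set.mem_sdiff, mem_ofPred_eq, mem_singleton_iff, ang_eq_zero_iff]
  refine and_congr_left fun hQ => and_congr_right fun hz => ?_
  rcases axes_of_mem_Econe_of_notMem hz hQ with ⟨rfl, hb⟩ | ⟨ha, rfl⟩
  · simp [hN b hb.le, hb.ne']
  · simp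

lemma setOf_ang_eq_pi_div_two_sdiff {N : ℝ × ℝ → ℝ} (hN : ∀ a, 0 ≤ a → N (a, 0) = a) :
    {z | z ∈ Econe ∧ 1 ≤ N z ∧ ang z ∈ ({π / 2} : Set ℝ)} \ Ioi 0 ×ˢ Ioi 0 =
      {w | w ∈ Econe ∧ 1 ≤ w.1} \ Ioi 0 ×ˢ Ioi 0 := by
  ext ⟨a, b⟩
  simp only [Set.mem_sdiff, mem_ofPred_eq, mem_singleton_iff, ang_eq_pi_div_two_iff]
  refine and_congr_left fun hQ => and_congr_right fun hz => ?_
  rcases axes_of_mem_Econe_of_notMem hz hQ with ⟨rfl, hb⟩ | ⟨ha, rfl⟩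
  · simp [hb.ne']
  · simp [hN a ha.le]

lemma setOf_ang_mem_Ioo_subset (N : ℝ × ℝ → ℝ) :
    {z | z ∈ Econe ∧ 1 ≤ N z ∧ ang z ∈ Ioo 0 (π / 2)} ⊆ Ioi 0 ×ˢ Ioi 0 := by
  rintro ⟨a, b⟩ ⟨⟨⟨ha : 0 ≤ a, -⟩, -⟩, -, h⟩
  rw [ang_mem_Ioo_iff] at h
  rcases div_pos_iff.1 h with hab | ⟨ha', -⟩
  · exact hab
  · exact absurd ha' ha.not_gt

theorem stmt5_general (μ : Measure (ℝ × ℝ))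
    (hhom : ∀ B : Set (ℝ × ℝ), B ⊆ Econe → MeasurableSet B → ∀ c > (0 : ℝ),
      μ (c • B) = ENNReal.ofReal c⁻¹ * μ B)
    (hstd : ∀ z > (0 : ℝ),
      μ {w | w ∈ Econe ∧ z ≤ w.1} = ENNReal.ofReal (1 / z) ∧
      μ {w | w ∈ Econe ∧ z ≤ w.2} = ENNReal.ofReal (1 / z))
    (hti : μ (Ici 1 ×ˢ Ici 1) = 0) :
    μ (Ioi 0 ×ˢ Ioi 0) = 0 ∧
    ∀ Nn : ℝ × ℝ → ℝ,
      (∀ z w, Nn (z + w) ≤ Nn z + Nn w) →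
      (∀ (c : ℝ) (z), Nn (c • z) = |c| * Nn z) →
      (∀ z, Nn z = 0 ↔ z = 0) →
      Nn (1, 0) = 1 → Nn (0, 1) = 1 →
      ∀ Φ : Measure ℝ,
        (∀ B : Set ℝ, MeasurableSet B →
          Φ B = μ {z | z ∈ Econe ∧ 1 ≤ Nn z ∧ ang z ∈ B}) →
        Φ {0} = 1 ∧ Φ {π / 2} = 1 ∧ Φ (Ioo 0 (π / 2)) = 0 := by
  have hQ : ∀ c > (0 : ℝ), μ (Ici c ×ˢ Ici c) = 0 := fun c hc => by
    rw [Ici_prod_Ici_eq_smul hc, hhom _ Ici_one_prod_Ici_one_subset_Econe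
      (measurableSet_Ici.prod measurableSet_Ici) c hc, hti, mul_zero]
  have hpos := measure_Ioi_prod_Ioi_eq_zero hQ
  refine ⟨hpos, fun Nn _ hsmul _ h10 h01 Φ hΦ => ⟨?_, ?_, ?_⟩⟩
  · have hN : ∀ b, 0 ≤ b → Nn (0, b) = b := fun b hb => by
      simpa using apply_smul_eq_of_nonneg hsmul h01 hb
    rw [hΦ _ (measurableSet_singleton 0), ← measure_sdiff_null hpos, setOf_ang_eq_zero_sdiff hN,
      measure_sdiff_null hpos, (hstd 1 one_pos).2, div_one, ENNReal.ofReal_one]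
  · have hN : ∀ a, 0 ≤ a → Nn (a, 0) = a := fun a ha => by
      simpa using apply_smul_eq_of_nonneg hsmul h10 ha
    rw [hΦ _ (measurableSet_singleton _), ← measure_sdiff_null hpos,
      setOf_ang_eq_pi_div_two_sdiff hN, measure_sdiff_null hpos, (hstd 1 one_pos).1, div_one,
      ENNReal.ofReal_one]
  · rw [hΦ _ measurableSet_Ioo]
    exact measure_mono_null (setOf_ang_mem_Ioo_subset Nn) hpos

theorem stmt5 (μ : Measure (ℝ × ℝ)) (hμE : μ Econeᶜ = 0)
    (hbf : ∀ ε > (0 : ℝ), μ {z | z ∈ Econe ∧ ε ≤ max z.1 z.2} < ⊤)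
    (hhom : ∀ B : Set (ℝ × ℝ), B ⊆ Econe → MeasurableSet B → ∀ c > (0 : ℝ),
      μ (c • B) = ENNReal.ofReal c⁻¹ * μ B)
    (hstd : ∀ z > (0 : ℝ),
      μ {w | w ∈ Econe ∧ z ≤ w.1} = ENNReal.ofReal (1 / z) ∧
      μ {w | w ∈ Econe ∧ z ≤ w.2} = ENNReal.ofReal (1 / z))
    (hti : μ (Ici 1 ×ˢ Ici 1) = 0) :
    μ (Ioi 0 ×ˢ Ioi 0) = 0 ∧
    ∀ Nn : ℝ × ℝ → ℝ,
      (∀ z w, Nn (z + w) ≤ Nn z + Nn w) →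
      (∀ (c : ℝ) (z), Nn (c • z) = |c| * Nn z) →
      (∀ z, Nn z = 0 ↔ z = 0) →
      Nn (1, 0) = 1 → Nn (0, 1) = 1 →
      ∀ Φ : Measure ℝ,
        (∀ B : Set ℝ, MeasurableSet B →
          Φ B = μ {z | z ∈ Econe ∧ 1 ≤ Nn z ∧ ang z ∈ B}) →
        Φ {0} = 1 ∧ Φ {π / 2} = 1 ∧ Φ (Ioo 0 (π / 2)) = 0 :=
  stmt5_general μ hhom hstd hti
end
end

section
/- Let μ be a boundedly finite Borel measure on E = [0,∞)² ∖ {(0,0)} that is homogeneous of degree −1 and has standardized marginals, and suppose μ([1,∞)×[1,∞)) = 1 (complete tail dependence). Then μ is concentrated on the main diagonal, i.e. μ({z ∈ E : z₁ ≠ z₂}) = 0, and for every norm ‖·‖ on ℝ² with ‖(1,0)‖ = 1 = ‖(0,1)‖ the spectral measure Φ of μ with respect to ‖·‖ is concentrated at π/4 with Φ({π/4}) = ‖(1,1)‖. -/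
open MeasureTheory Set Real Filter Topology
open scoped ENNReal Pointwise

noncomputable section

/-!
Complete tail dependence says that `[1,∞)²` carries the whole mass `1` of the marginal tail
`{z₁ ≥ 1}`, so the strip `{z₁ ≥ 1, z₂ < 1}` is null; by homogeneity so is every strip
`{z₁ ≥ c, z₂ < c}` with `c > 0`, and countably many of these (together with their mirror images)
cover the off-diagonal part of `E`. On the diagonal `‖(t,t)‖ = t ‖(1,1)‖`, so the spectral mass at
`π/4` is the marginal tail `μ {z₁ ≥ ‖(1,1)‖⁻¹} = ‖(1,1)‖`.
-/

lemma mem_Econe_iff {z : ℝ × ℝ} : z ∈ Econe ↔ (0 ≤ z.1 ∧ 0 ≤ z.2) ∧ z ≠ 0 := by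
  rw [Econe, Set.mem_sdiff, mem_prod, mem_Ici, mem_Ici, mem_singleton_iff, Prod.mk_zero_zero]

lemma smul_mem_Econe_iff_s6 {c : ℝ} (hc : 0 < c) {w : ℝ × ℝ} : c • w ∈ Econe ↔ w ∈ Econe := by
  simp only [mem_Econe_iff, Prod.smul_fst, Prod.smul_snd, smul_eq_mul,
    mul_nonneg_iff_of_pos_left hc, ne_eq, smul_eq_zero, hc.ne', false_or]

lemma ang_eq_pi_div_four_iff {z : ℝ × ℝ} (hz : z ∈ Econe) : ang z = π / 4 ↔ z.1 = z.2 := by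
  obtain ⟨⟨-, hz₂⟩, hz₀⟩ := mem_Econe_iff.1 hz
  unfold ang
  split_ifs with h
  · exact iff_of_false (by linarith [pi_pos]) fun he => hz₀ (Prod.ext (he.trans h) h)
  · rw [← arctan_one, arctan_injective.eq_iff, div_eq_one_iff_eq h]

lemma Ici_one_prod_Ici_one_eq :
    Ici (1 : ℝ) ×ˢ Ici (1 : ℝ) = {w | w ∈ Econe ∧ 1 ≤ w.1 ∧ 1 ≤ w.2} := by
  ext w
  simp only [mem_prod, mem_Ici, mem_ofPred_eq, mem_Econe_iff, iff_and_self, ne_eq]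
  rintro ⟨h₁, h₂⟩
  exact ⟨⟨by linarith, by linarith⟩, fun h => by norm_num [h] at h₁⟩

lemma measure_strip_eq_zero (μ : Measure (ℝ × ℝ))
    (hhom : ∀ B : Set (ℝ × ℝ), B ⊆ Econe → MeasurableSet B → ∀ c > (0 : ℝ),
      μ (c • B) = ENNReal.ofReal c⁻¹ * μ B)
    {p q : ℝ × ℝ → ℝ} (hpm : Measurable p) (hqm : Measurable q)
    (hp : ∀ (c : ℝ) w, p (c • w) = c * p w) (hq : ∀ (c : ℝ) w, q (c • w) = c * q w)
    (hp₁ : μ {w | w ∈ Econe ∧ 1 ≤ p w} = 1) (hpq₁ : μ {w | w ∈ Econe ∧ 1 ≤ p w ∧ 1 ≤ q w} = 1)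
    {c : ℝ} (hc : 0 < c) :
    μ {w | w ∈ Econe ∧ c ≤ p w ∧ q w < c} = 0 := by
  set S := {w | w ∈ Econe ∧ 1 ≤ p w ∧ q w < 1}
  have hSm : MeasurableSet S :=
    measurableSet_Econe.inter ((measurableSet_le measurable_const hpm).inter
      (measurableSet_lt hqm measurable_const))
  have hS : μ S = 0 := by
    have hS_eq : S = {w | w ∈ Econe ∧ 1 ≤ p w} \ {w | w ∈ Econe ∧ 1 ≤ p w ∧ 1 ≤ q w} := by
      ext w
      simp only [S, mem_ofPred_eq, Set.mem_sdiff, not_and, not_le]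
      tauto
    have hsub : {w | w ∈ Econe ∧ 1 ≤ p w ∧ 1 ≤ q w} ⊆ {w | w ∈ Econe ∧ 1 ≤ p w} :=
      fun w hw => ⟨hw.1, hw.2.1⟩
    have hm : MeasurableSet {w | w ∈ Econe ∧ 1 ≤ p w ∧ 1 ≤ q w} :=
      measurableSet_Econe.inter ((measurableSet_le measurable_const hpm).inter
        (measurableSet_le measurable_const hqm))
    rw [hS_eq, measure_sdiff hsub hm.nullMeasurableSet (by rw [hpq₁]; exact ENNReal.one_ne_top), hp₁, hpq₁, tsub_self]
  have hcS : c • S = {w | w ∈ Econe ∧ c ≤ p w ∧ q w < c} := by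
    ext w
    rw [mem_smul_set_iff_inv_smul_mem₀ hc.ne']
    simp only [S, mem_ofPred_eq, smul_mem_Econe_iff_s6 (inv_pos.2 hc), hp, hq, inv_mul_eq_div,
      one_le_div hc, div_lt_one hc]
  rw [← hcS, hhom S (fun w hw => hw.1) hSm c hc, hS, mul_zero]

lemma measure_setOf_lt_eq_zero (μ : Measure (ℝ × ℝ)) {p q : ℝ × ℝ → ℝ}
    (hq : ∀ w ∈ Econe, 0 ≤ q w)
    (hstrip : ∀ c > (0 : ℝ), μ {w | w ∈ Econe ∧ c ≤ p w ∧ q w < c} = 0) :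
    μ {w | w ∈ Econe ∧ q w < p w} = 0 := by
  have hcover : {w | w ∈ Econe ∧ q w < p w} ⊆
      ⋃ r ∈ {r : ℚ | 0 < (r : ℝ)}, {w | w ∈ Econe ∧ (r : ℝ) ≤ p w ∧ q w < r} := by
    rintro w ⟨hw, hlt⟩
    obtain ⟨r, hqr, hrp⟩ := exists_rat_btwn hlt
    exact mem_biUnion ((hq w hw).trans_lt hqr) ⟨hw, hrp.le, hqr⟩
  exact measure_mono_null hcover
    ((measure_biUnion_null_iff (to_countable _)).2 fun r hr => hstrip r hr)

lemma nonneg_of_subadditive_of_abs_smul {N : ℝ × ℝ → ℝ}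
    (hsmul : ∀ (c : ℝ) (z : ℝ × ℝ), N (c • z) = |c| * N z) (htri : ∀ z w, N (z + w) ≤ N z + N w) (z : ℝ × ℝ) :
    0 ≤ N z := by
  have h₀ : N 0 = 0 := by simpa using hsmul 0 z
  have hneg : N (-z) = N z := by simpa using hsmul (-1) z
  have := htri z (-z)
  rw [add_neg_cancel, h₀, hneg] at this
  linarith

lemma apply_diag_eq {N : ℝ × ℝ → ℝ} (hsmul : ∀ (c : ℝ) (z : ℝ × ℝ), N (c • z) = |c| * N z)
    (t : ℝ) : N (t, t) = |t| * N (1, 1) := by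
  simpa using hsmul t (1, 1)

lemma measure_setOf_ne_eq_zero (μ : Measure (ℝ × ℝ))
    (hhom : ∀ B : Set (ℝ × ℝ), B ⊆ Econe → MeasurableSet B → ∀ c > (0 : ℝ),
      μ (c • B) = ENNReal.ofReal c⁻¹ * μ B)
    (hstd₁ : μ {w | w ∈ Econe ∧ 1 ≤ w.1} = 1) (hstd₂ : μ {w | w ∈ Econe ∧ 1 ≤ w.2} = 1)
    (htd : μ (Ici 1 ×ˢ Ici 1) = 1) :
    μ {z | z ∈ Econe ∧ z.1 ≠ z.2} = 0 := by
  have htd₁₂ : μ {w | w ∈ Econe ∧ 1 ≤ w.1 ∧ 1 ≤ w.2} = 1 := Ici_one_prod_Ici_one_eq ▸ htd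
  have htd₂₁ : μ {w | w ∈ Econe ∧ 1 ≤ w.2 ∧ 1 ≤ w.1} = 1 := by
    convert htd₁₂ using 4 with w
    exact and_congr_right' and_comm
  have hsplit : {z | z ∈ Econe ∧ z.1 ≠ z.2} =
      {w | w ∈ Econe ∧ w.2 < w.1} ∪ {w | w ∈ Econe ∧ w.1 < w.2} := by
    ext z
    simp only [mem_ofPred_eq, mem_union, ne_iff_lt_or_gt]
    tauto
  rw [hsplit]
  refine measure_union_null ?_ ?_
  · exact measure_setOf_lt_eq_zero μ (fun w hw => (mem_Econe_iff.1 hw).1.2) fun _ hc =>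
      measure_strip_eq_zero μ hhom measurable_fst measurable_snd (fun _ _ => rfl)
        (fun _ _ => rfl) hstd₁ htd₁₂ hc
  · exact measure_setOf_lt_eq_zero μ (fun w hw => (mem_Econe_iff.1 hw).1.1) fun _ hc =>
      measure_strip_eq_zero μ hhom measurable_snd measurable_fst (fun _ _ => rfl)
        (fun _ _ => rfl) hstd₂ htd₂₁ hc

lemma setOf_one_le_and_ang_eq_pi_div_four {N : ℝ × ℝ → ℝ}
    (hsmul : ∀ (c : ℝ) (z : ℝ × ℝ), N (c • z) = |c| * N z) (hN : 0 < N (1, 1)) :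
    {z | z ∈ Econe ∧ 1 ≤ N z ∧ ang z ∈ ({π / 4} : Set ℝ)} =
      {w | w ∈ Econe ∧ (N (1, 1))⁻¹ ≤ w.1} \ {z | z ∈ Econe ∧ z.1 ≠ z.2} := by
  have hdiag {a : ℝ} (ha : 0 ≤ a) : 1 ≤ N (a, a) ↔ (N (1, 1))⁻¹ ≤ a := by
    rw [apply_diag_eq hsmul, abs_of_nonneg ha, inv_le_iff_one_le_mul₀ hN]
  ext ⟨a, b⟩
  simp only [mem_ofPred_eq, Set.mem_sdiff, mem_singleton_iff, not_and, not_not]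
  constructor
  · rintro ⟨hz, hNz, hang⟩
    obtain rfl : a = b := (ang_eq_pi_div_four_iff hz).1 hang
    exact ⟨⟨hz, (hdiag (mem_Econe_iff.1 hz).1.1).1 hNz⟩, fun _ => rfl⟩
  · rintro ⟨⟨hz, ha⟩, hd⟩
    obtain rfl : a = b := hd hz
    exact ⟨hz, (hdiag (mem_Econe_iff.1 hz).1.1).2 ha, (ang_eq_pi_div_four_iff hz).2 rfl⟩

theorem stmt6_general (μ : Measure (ℝ × ℝ))
    (hhom : ∀ B : Set (ℝ × ℝ), B ⊆ Econe → MeasurableSet B → ∀ c > (0 : ℝ),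
      μ (c • B) = ENNReal.ofReal c⁻¹ * μ B)
    (hstd : ∀ z > (0 : ℝ),
      μ {w | w ∈ Econe ∧ z ≤ w.1} = ENNReal.ofReal (1 / z) ∧
      μ {w | w ∈ Econe ∧ z ≤ w.2} = ENNReal.ofReal (1 / z))
    (htd : μ (Ici 1 ×ˢ Ici 1) = 1) :
    μ {z | z ∈ Econe ∧ z.1 ≠ z.2} = 0 ∧
    ∀ Nn : ℝ × ℝ → ℝ,
      (∀ z w, Nn (z + w) ≤ Nn z + Nn w) →
      (∀ (c : ℝ) (z), Nn (c • z) = |c| * Nn z) →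
      (∀ z, Nn z = 0 ↔ z = 0) →
      Nn (1, 0) = 1 → Nn (0, 1) = 1 →
      ∀ Φ : Measure ℝ,
        (∀ B : Set ℝ, MeasurableSet B →
          Φ B = μ {z | z ∈ Econe ∧ 1 ≤ Nn z ∧ ang z ∈ B}) →
        Φ {π / 4} = ENNReal.ofReal (Nn (1, 1)) ∧ Φ ({π / 4}ᶜ) = 0 := by
  have hoff : μ {z | z ∈ Econe ∧ z.1 ≠ z.2} = 0 :=
    measure_setOf_ne_eq_zero μ hhom (by simpa using (hstd 1 one_pos).1)
      (by simpa using (hstd 1 one_pos).2) htd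
  refine ⟨hoff, fun Nn htri hsmul hzero _ _ Φ hΦ => ?_⟩
  have hN : 0 < Nn (1, 1) :=
    (nonneg_of_subadditive_of_abs_smul hsmul htri _).lt_of_ne'
      ((hzero _).not.2 (by simp [Prod.ext_iff]))
  constructor
  · rw [hΦ _ (measurableSet_singleton _), setOf_one_le_and_ang_eq_pi_div_four hsmul hN,
      measure_sdiff_null hoff, (hstd _ (inv_pos.2 hN)).1, one_div, inv_inv]
  · rw [hΦ _ (measurableSet_singleton _).compl]
    refine measure_mono_null ?_ hoff
    rintro z ⟨hz, -, hang⟩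
    exact ⟨hz, fun hd => hang ((ang_eq_pi_div_four_iff hz).2 hd)⟩

theorem stmt6 (μ : Measure (ℝ × ℝ)) (hμE : μ Econeᶜ = 0)
    (hbf : ∀ ε > (0 : ℝ), μ {z | z ∈ Econe ∧ ε ≤ max z.1 z.2} < ⊤)
    (hhom : ∀ B : Set (ℝ × ℝ), B ⊆ Econe → MeasurableSet B → ∀ c > (0 : ℝ),
      μ (c • B) = ENNReal.ofReal c⁻¹ * μ B)
    (hstd : ∀ z > (0 : ℝ),
      μ {w | w ∈ Econe ∧ z ≤ w.1} = ENNReal.ofReal (1 / z) ∧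
      μ {w | w ∈ Econe ∧ z ≤ w.2} = ENNReal.ofReal (1 / z))
    (htd : μ (Ici 1 ×ˢ Ici 1) = 1) :
    μ {z | z ∈ Econe ∧ z.1 ≠ z.2} = 0 ∧
    ∀ Nn : ℝ × ℝ → ℝ,
      (∀ z w, Nn (z + w) ≤ Nn z + Nn w) →
      (∀ (c : ℝ) (z), Nn (c • z) = |c| * Nn z) →
      (∀ z, Nn z = 0 ↔ z = 0) →
      Nn (1, 0) = 1 → Nn (0, 1) = 1 →
      ∀ Φ : Measure ℝ,
        (∀ B : Set ℝ, MeasurableSet B →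
          Φ B = μ {z | z ∈ Econe ∧ 1 ≤ Nn z ∧ ang z ∈ B}) →
        Φ {π / 4} = ENNReal.ofReal (Nn (1, 1)) ∧ Φ ({π / 4}ᶜ) = 0 :=
  stmt6_general μ hhom hstd htd
end
end

section
/- Fix p ∈ [1,∞] and θ ∈ (0,π/2), and define x_p(θ) = ‖(1, cotθ)‖_p, i.e. x_p(θ) = (1 + cot^p θ)^{1/p} for p < ∞ and x_∞(θ) = max(1, cotθ). Then for every x ∈ [0,∞): x·tanθ < y_p(x) if and only if x < x_p(θ). -/
open MeasureTheory Set Real Filter Topology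
open scoped ENNReal

noncomputable section

/-- The function `y_p : [0,∞) → [0,∞]`: for `p < ∞`, `y_p(x) = ∞` on `[0,1]` and
`y_p(x) = (1 + 1/(x^p - 1))^{1/p}` on `(1,∞)`; for `p = ∞`, `y_∞(x) = ∞` on `[0,1)`
and `y_∞(x) = 1` on `[1,∞)`. -/
def ypR (p : ℝ≥0∞) (x : ℝ) : ℝ≥0∞ :=
  if p = ⊤ then (if x < 1 then ⊤ else 1)
  else if x ≤ 1 then ⊤
  else ENNReal.ofReal ((1 + 1 / (x ^ p.toReal - 1)) ^ (1 / p.toReal))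

/-- `x_p(θ) = ‖(1, cot θ)‖_p`. -/
def xpR (p : ℝ≥0∞) (θ : ℝ) : ℝ :=
  if p = ⊤ then max 1 (Real.cot θ)
  else (1 + Real.cot θ ^ p.toReal) ^ (1 / p.toReal)

/-
With `t = tan θ > 0` we have `cot θ = t⁻¹`. For `p = ∞` the claim is `x < 1 ∨ x t < 1`. For
finite `p = q` and `x > 1`, raise both sides to the power `q` and put `u = x^q`: since
`1 + 1/(u - 1) = u/(u - 1)`, the inequality `u t^q < u/(u - 1)` is `t^q (u - 1) < 1`, i.e.
`u < 1 + t^{-q}`; for `x ≤ 1` both sides hold because `‖(1, t⁻¹)‖_q > 1`.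
-/

lemma mul_lt_one_add_one_div_sub_one_iff {s u : ℝ} (hs : 0 < s) (hu : 1 < u) :
    u * s < 1 + 1 / (u - 1) ↔ u < 1 + s⁻¹ := by
  have hu1 : 0 < u - 1 := sub_pos.2 hu
  have hsum : 1 + 1 / (u - 1) = u / (u - 1) := by field_simp; ring
  rw [hsum, lt_div_iff₀ hu1, ← sub_lt_iff_lt_add', ← one_div, lt_div_iff₀' hs, mul_assoc,
    mul_lt_iff_lt_one_right (by linarith)]

lemma one_lt_one_add_rpow_rpow_one_div {a q : ℝ} (ha : 0 < a) (hq : 0 < q) :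
    1 < (1 + a ^ q) ^ (1 / q) :=
  Real.one_lt_rpow (lt_add_of_pos_right 1 (Real.rpow_pos_of_pos ha q)) (by positivity)

lemma mul_lt_one_add_one_div_rpow_sub_one_rpow_iff {q t x : ℝ} (hq : 0 < q) (ht : 0 < t)
    (hx : 1 < x) :
    x * t < (1 + 1 / (x ^ q - 1)) ^ (1 / q) ↔ x < (1 + t⁻¹ ^ q) ^ (1 / q) := by
  have hxq : 1 < x ^ q := Real.one_lt_rpow hx hq
  have hpos : 0 ≤ 1 + 1 / (x ^ q - 1) := by
    have := one_div_pos.2 (sub_pos.2 hxq); positivity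
  rw [one_div q, Real.lt_rpow_inv_iff_of_pos (by positivity) hpos hq,
    Real.lt_rpow_inv_iff_of_pos (by positivity) (by positivity) hq,
    Real.mul_rpow (by positivity) ht.le, Real.inv_rpow ht.le]
  exact mul_lt_one_add_one_div_sub_one_iff (Real.rpow_pos_of_pos ht q) hxq

lemma ofReal_mul_lt_ypR_top_iff {t : ℝ} (ht : 0 < t) (x : ℝ) :
    ENNReal.ofReal (x * t) < ypR ⊤ x ↔ x < max 1 t⁻¹ := by
  rw [ypR, if_pos rfl, lt_max_iff]
  by_cases hx : x < 1
  · simp [hx]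
  · rw [if_neg hx, ENNReal.ofReal_lt_one, ← lt_div_iff₀ ht, one_div]
    simp [hx]

lemma ofReal_mul_lt_ypR_iff {p : ℝ≥0∞} (hp0 : p ≠ 0) (hp : p ≠ ⊤) {t : ℝ} (ht : 0 < t) (x : ℝ) :
    ENNReal.ofReal (x * t) < ypR p x ↔ x < (1 + t⁻¹ ^ p.toReal) ^ (1 / p.toReal) := by
  have hq : 0 < p.toReal := ENNReal.toReal_pos hp0 hp
  rw [ypR, if_neg hp]
  by_cases hx : x ≤ 1
  · simp only [if_pos hx, ENNReal.ofReal_lt_top, true_iff]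
    exact hx.trans_lt (one_lt_one_add_rpow_rpow_one_div (inv_pos.2 ht) hq)
  · have hx1 : 1 < x := not_le.1 hx
    rw [if_neg hx, ENNReal.ofReal_lt_ofReal_iff_of_nonneg (by positivity)]
    exact mul_lt_one_add_one_div_rpow_sub_one_rpow_iff hq ht hx1

theorem stmt10 (p : ℝ≥0∞) (hp : 1 ≤ p) (θ : ℝ) (hθ : θ ∈ Ioo 0 (π / 2)) :
    ∀ x : ℝ, 0 ≤ x →
      (ENNReal.ofReal (x * Real.tan θ) < ypR p x ↔ x < xpR p θ) := by
  intro x _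
  have ht : 0 < tan θ := tan_pos_of_pos_of_lt_pi_div_two hθ.1 hθ.2
  rw [xpR, ← Real.tan_inv_eq_cot]
  split_ifs with hp_top
  · subst hp_top
    exact ofReal_mul_lt_ypR_top_iff ht x
  · exact ofReal_mul_lt_ypR_iff (zero_lt_one.trans_le hp).ne' hp_top ht x
end
end

section
/- Let μ be a boundedly finite Borel measure on E = [0,∞)² ∖ {(0,0)} that is homogeneous of degree −1, let ‖·‖ be a norm on ℝ² with ‖(1,0)‖ = 1 = ‖(0,1)‖, and let Φ be the spectral measure of μ with respect to ‖·‖. Then for every (x₁,x₂) ∈ [0,∞)² with x₁ + x₂ > 0, the stable tail dependence function admits the spectral representation μ({z ∈ E : x₁z₁ ≥ 1 or x₂z₂ ≥ 1}) = ∫_{[0,π/2]} max(x₁·sinθ, x₂·cosθ)/‖(sinθ,cosθ)‖ Φ(dθ). -/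
open MeasureTheory Set Real Filter Topology
open scoped ENNReal Pointwise

noncomputable section

/-!
Homogeneity of degree `-1` gives `μ {z : ‖z‖ ≥ s, θ z ∈ B} = s⁻¹ Φ B`. Hence for every measurable
`f ≥ 0` the region `{z : ‖z‖ f(θ z) ≥ 1}` has mass `∫ f dΦ`: both sides are additive over
functions with disjoint supports and continuous along increasing sequences, the latter because
homogeneity makes `{‖z‖ f(θ z) ≥ 1}` and `{‖z‖ f(θ z) > 1}` equally heavy. Writing
`z = r • (sin θ, cos θ)` with `r > 0` turns `max (x₁ z₁) (x₂ z₂) ≥ 1` into `‖z‖ f(θ z) ≥ 1` with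
`f θ = max (x₁ sin θ) (x₂ cos θ) / ‖(sin θ, cos θ)‖`.
-/

section Polar

variable {E Θ : Type*}

def radialExterior (C : Set E) (ρ : E → ℝ) (θ : E → Θ) (f : Θ → ℝ≥0∞) : Set E :=
  {z | z ∈ C ∧ 1 ≤ ENNReal.ofReal (ρ z) * f (θ z)}

section SetIdentities

variable {C : Set E} {ρ : E → ℝ} {θ : E → Θ}

lemma radialExterior_indicator_one (s : Set Θ) :
    radialExterior C ρ θ (s.indicator 1) = {z | z ∈ C ∧ 1 ≤ ρ z ∧ θ z ∈ s} := by
  ext z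
  by_cases h : θ z ∈ s <;> simp [radialExterior, h, and_comm]

lemma radialExterior_subset_preimage_support (f : Θ → ℝ≥0∞) :
    radialExterior C ρ θ f ⊆ θ ⁻¹' Function.support f := fun z hz h0 ↦ by
  simp [radialExterior, h0] at hz

lemma radialExterior_add {g h : Θ → ℝ≥0∞}
    (hgh : Disjoint (Function.support g) (Function.support h)) :
    radialExterior C ρ θ (g + h) = radialExterior C ρ θ g ∪ radialExterior C ρ θ h := by
  ext z
  obtain h0 | h0 : g (θ z) = 0 ∨ h (θ z) = 0 := or_iff_not_imp_left.2 fun hz ↦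
    Function.notMem_support.1 (disjoint_left.1 hgh hz)
  all_goals simp [radialExterior, h0]

end SetIdentities

variable [MeasurableSpace E] [MeasurableSpace Θ] [MulAction ℝ E]

structure IsPolarCoord (C : Set E) (ρ : E → ℝ) (θ : E → Θ) : Prop where
  measurableSet : MeasurableSet C
  smul_mem_iff : ∀ {c : ℝ}, 0 < c → ∀ z, c • z ∈ C ↔ z ∈ C
  measurable_rho : Measurable ρ
  rho_smul : ∀ {c : ℝ}, 0 < c → ∀ z, ρ (c • z) = c * ρ z
  measurable_theta : Measurable θ
  theta_smul : ∀ {c : ℝ}, 0 < c → ∀ z, θ (c • z) = θ z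

def IsHomogeneousOn (μ : Measure E) (C : Set E) : Prop :=
  ∀ B ⊆ C, MeasurableSet B → ∀ c > (0 : ℝ), μ (c • B) = ENNReal.ofReal c⁻¹ * μ B

namespace IsPolarCoord

variable {μ : Measure E} {C : Set E} {ρ : E → ℝ} {θ : E → Θ} {f : Θ → ℝ≥0∞}
  (hP : IsPolarCoord C ρ θ) (hμ : IsHomogeneousOn μ C)
include hP

lemma measurableSet_radialExterior (hf : Measurable f) :
    MeasurableSet (radialExterior C ρ θ f) :=
  hP.measurableSet.inter <| measurableSet_le measurable_const <|
    hP.measurable_rho.ennreal_ofReal.mul (hf.comp hP.measurable_theta)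

lemma radialExterior_smul {c : ℝ≥0∞} (hc₀ : c ≠ 0) (hc : c ≠ ⊤) :
    radialExterior C ρ θ (c • f) = c.toReal⁻¹ • radialExterior C ρ θ f := by
  have hpos : 0 < c.toReal := ENNReal.toReal_pos hc₀ hc
  ext z
  rw [mem_smul_set_iff_inv_smul_mem₀ (inv_ne_zero hpos.ne'), inv_inv]
  simp only [radialExterior, mem_ofPred_eq, hP.smul_mem_iff hpos, hP.rho_smul hpos,
    hP.theta_smul hpos, Pi.smul_apply, smul_eq_mul, ENNReal.ofReal_mul hpos.le,
    ENNReal.ofReal_toReal hc, mul_left_comm c, mul_assoc]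

lemma measure_radialExterior_add {g h : Θ → ℝ≥0∞} (hh : Measurable h)
    (hgh : Disjoint (Function.support g) (Function.support h)) :
    μ (radialExterior C ρ θ (g + h)) = μ (radialExterior C ρ θ g) + μ (radialExterior C ρ θ h) :=
  radialExterior_add hgh ▸ measure_union ((hgh.preimage θ).mono
    (radialExterior_subset_preimage_support g) (radialExterior_subset_preimage_support h))
    (hP.measurableSet_radialExterior hh)

include hμ

lemma measure_radialExterior_smul (hf : Measurable f) {c : ℝ≥0∞} (hc : c ≠ ⊤) :
    μ (radialExterior C ρ θ (c • f)) = c * μ (radialExterior C ρ θ f) := by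
  rcases eq_or_ne c 0 with rfl | hc₀
  · simp [radialExterior]
  rw [hP.radialExterior_smul hc₀ hc, hμ _ (fun z hz ↦ hz.1) (hP.measurableSet_radialExterior hf)
    _ (inv_pos.2 (ENNReal.toReal_pos hc₀ hc)), inv_inv, ENNReal.ofReal_toReal hc]

lemma measure_radialExterior_eq_strict (hf : Measurable f) :
    μ {z | z ∈ C ∧ 1 < ENNReal.ofReal (ρ z) * f (θ z)} = μ (radialExterior C ρ θ f) := by
  refine le_antisymm (measure_mono fun z hz ↦ ⟨hz.1, hz.2.le⟩)
    (ENNReal.le_of_forall_lt_one_mul_le fun a ha ↦ ?_)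
  rw [← hP.measure_radialExterior_smul hμ hf ha.ne_top]
  refine measure_mono fun z ⟨hz, hle⟩ ↦ ⟨hz, lt_of_not_ge fun hz₁ ↦ ha.not_ge ?_⟩
  calc 1 ≤ ENNReal.ofReal (ρ z) * (a • f) (θ z) := hle
    _ = a * (ENNReal.ofReal (ρ z) * f (θ z)) := by simp only [Pi.smul_apply, smul_eq_mul]; ring
    _ ≤ a := mul_le_of_le_one_right' hz₁

lemma measure_radialExterior_iSup {f : ℕ → Θ → ℝ≥0∞} (hf : ∀ n, Measurable (f n))
    (hmono : Monotone f) :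
    μ (radialExterior C ρ θ fun x ↦ ⨆ n, f n x) = ⨆ n, μ (radialExterior C ρ θ (f n)) := by
  have hunion : {z | z ∈ C ∧ 1 < ENNReal.ofReal (ρ z) * ⨆ n, f n (θ z)} =
      ⋃ n, {z | z ∈ C ∧ 1 < ENNReal.ofReal (ρ z) * f n (θ z)} := by
    ext z
    simp [ENNReal.mul_iSup, lt_iSup_iff]
  have hmono' : Monotone fun n ↦ {z | z ∈ C ∧ 1 < ENNReal.ofReal (ρ z) * f n (θ z)} :=
    fun m n hmn z hz ↦ ⟨hz.1, hz.2.trans_le (by gcongr; exact hmono hmn _)⟩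
  rw [← hP.measure_radialExterior_eq_strict hμ (.iSup hf), hunion, hmono'.measure_iUnion]
  exact iSup_congr fun n ↦ hP.measure_radialExterior_eq_strict hμ (hf n)

variable {Φ : Measure Θ} (hΦ : ∀ B, MeasurableSet B → Φ B = μ {z | z ∈ C ∧ 1 ≤ ρ z ∧ θ z ∈ B})
include hΦ

lemma measure_radialExterior_indicator {c : ℝ≥0∞} (hc : c ≠ ⊤) {s : Set Θ} (hs : MeasurableSet s) :
    μ (radialExterior C ρ θ (s.indicator fun _ ↦ c)) = c * Φ s := by
  have hcs : (s.indicator fun _ ↦ c) = c • s.indicator 1 := by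
    ext x
    by_cases h : x ∈ s <;> simp [h]
  rw [hcs, hP.measure_radialExterior_smul hμ (measurable_one.indicator hs) hc,
    radialExterior_indicator_one, hΦ s hs]

theorem measure_radialExterior (hf : Measurable f) :
    μ (radialExterior C ρ θ f) = ∫⁻ x, f x ∂Φ := by
  have hsup : ∀ ⦃g : ℕ → Θ → ℝ≥0∞⦄, (∀ n, Measurable (g n)) → Monotone g →
      (∀ n, μ (radialExterior C ρ θ (g n)) = ∫⁻ x, g n x ∂Φ) →
      μ (radialExterior C ρ θ fun x ↦ ⨆ n, g n x) = ∫⁻ x, ⨆ n, g n x ∂Φ := by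
    intro g hg hmono h
    rw [hP.measure_radialExterior_iSup hμ hg hmono, lintegral_iSup hg hmono]
    exact iSup_congr h
  refine Measurable.ennreal_induction (fun c s hs ↦ ?_) (fun g h hgh _ hh hg' hh' ↦ ?_) hsup hf
  · have hind (c : ℝ≥0∞) (hc : c ≠ ⊤) :
        μ (radialExterior C ρ θ (s.indicator fun _ ↦ c)) = ∫⁻ x, s.indicator (fun _ ↦ c) x ∂Φ := by
      rw [lintegral_indicator_const hs, hP.measure_radialExterior_indicator hμ hΦ hc hs]
    obtain hc | rfl := ne_or_eq c ⊤
    · exact hind c hc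
    have htop : (s.indicator fun _ ↦ ⊤ : Θ → ℝ≥0∞) =
        fun x ↦ ⨆ n : ℕ, s.indicator (fun _ ↦ (n : ℝ≥0∞)) x := by
      ext x
      by_cases h : x ∈ s <;> simp [h, ENNReal.iSup_natCast]
    rw [htop]
    exact hsup (fun n ↦ measurable_const.indicator hs)
      (fun m n hmn x ↦ indicator_le_indicator (by exact_mod_cast hmn))
      fun n ↦ hind n (ENNReal.natCast_ne_top n)
  · rw [hP.measure_radialExterior_add hh hgh, hg', hh']
    exact (lintegral_add_right g hh).symm

end IsPolarCoord

end Polar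

lemma continuous_of_add_le_of_smul {F : Type*} [NormedAddCommGroup F] [NormedSpace ℝ F]
    [FiniteDimensional ℝ F] {N : F → ℝ} (hadd : ∀ z w, N (z + w) ≤ N z + N w)
    (hsmul : ∀ (c : ℝ) z, N (c • z) = |c| * N z) : Continuous N :=
  continuousOn_univ.1 <| (Seminorm.of N hadd fun c z ↦ by rw [hsmul, Real.norm_eq_abs]).convexOn
    |>.continuousOn isOpen_univ

lemma nonneg_of_add_le_of_smul {F : Type*} [AddCommGroup F] [Module ℝ F] {N : F → ℝ}
    (hadd : ∀ z w, N (z + w) ≤ N z + N w) (hsmul : ∀ (c : ℝ) z, N (c • z) = |c| * N z) (z : F) :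
    0 ≤ N z :=
  apply_nonneg (Seminorm.of N hadd fun c z ↦ by rw [hsmul, Real.norm_eq_abs]) z

lemma measurable_ang : Measurable ang :=
  Measurable.ite (measurableSet_eq_fun measurable_snd measurable_const) measurable_const
    (measurable_arctan.comp (measurable_fst.div measurable_snd))

lemma ang_smul {c : ℝ} (hc : 0 < c) (z : ℝ × ℝ) : ang (c • z) = ang z := by
  simp [ang, hc.ne', mul_div_mul_left]

lemma smul_mem_econe_iff {c : ℝ} (hc : 0 < c) (z : ℝ × ℝ) : c • z ∈ Econe ↔ z ∈ Econe := by
  simp [Econe, ← Prod.zero_eq_mk, smul_pos_iff_of_pos_left hc]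

lemma ang_mem_Icc {z : ℝ × ℝ} (hz : z ∈ Econe) : ang z ∈ Icc 0 (π / 2) := by
  obtain ⟨⟨h₁, h₂⟩, -⟩ := hz
  unfold ang
  split_ifs
  · exact ⟨by positivity, le_rfl⟩
  · exact ⟨arctan_nonneg.2 (div_nonneg h₁ h₂), (arctan_lt_pi_div_two _).le⟩

lemma exists_pos_smul_sin_cos_ang {z : ℝ × ℝ} (hz : z ∈ Econe) :
    ∃ r : ℝ, 0 < r ∧ z = r • (sin (ang z), cos (ang z)) := by
  obtain ⟨⟨h₁, h₂⟩, h₀⟩ := hz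
  simp only [mem_Ici, mem_singleton_iff] at h₁ h₂ h₀
  by_cases h : z.2 = 0
  · refine ⟨z.1, lt_of_le_of_ne h₁ fun h' ↦ h₀ (Prod.ext h'.symm h), ?_⟩
    ext <;> simp [ang, h]
  have hs : 0 < √(1 + (z.1 / z.2) ^ 2) := by positivity
  refine ⟨z.2 * √(1 + (z.1 / z.2) ^ 2), mul_pos (lt_of_le_of_ne h₂ (Ne.symm h)) hs, ?_⟩
  ext
  · simp only [ang, if_neg h, sin_arctan, Prod.smul_fst, smul_eq_mul]
    rw [mul_assoc, mul_div_cancel₀ _ hs.ne', mul_div_cancel₀ _ h]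
  · simp only [ang, if_neg h, cos_arctan, Prod.smul_snd, smul_eq_mul]
    rw [mul_assoc, mul_one_div_cancel hs.ne', mul_one]

lemma sin_cos_ne_zero (θ : ℝ) : ((sin θ, cos θ) : ℝ × ℝ) ≠ 0 := fun h ↦ by
  have hsin : sin θ = 0 := congrArg Prod.fst h
  have hcos : cos θ = 0 := congrArg Prod.snd h
  simpa [hsin, hcos] using sin_sq_add_cos_sq θ

lemma max_mul_eq_of_eq_smul {N : ℝ × ℝ → ℝ} (hsmul : ∀ (c : ℝ) z, N (c • z) = |c| * N z)
    {r : ℝ} (hr : 0 < r) {z u : ℝ × ℝ} (hzu : z = r • u) (hu : N u ≠ 0) (x₁ x₂ : ℝ) :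
    max (x₁ * z.1) (x₂ * z.2) = N z * (max (x₁ * u.1) (x₂ * u.2) / N u) := by
  subst hzu
  rw [hsmul, abs_of_pos hr, mul_assoc, mul_div_cancel₀ _ hu]
  simp only [Prod.smul_fst, Prod.smul_snd, smul_eq_mul, mul_left_comm _ r,
    mul_max_of_nonneg _ _ hr.le]

lemma isPolarCoord_econe {N : ℝ × ℝ → ℝ} (hN : Continuous N)
    (hsmul : ∀ (c : ℝ) z, N (c • z) = |c| * N z) : IsPolarCoord Econe N ang where
  measurableSet := (measurableSet_Ici.prod measurableSet_Ici).diff (measurableSet_singleton _)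
  smul_mem_iff := smul_mem_econe_iff
  measurable_rho := hN.measurable
  rho_smul hc z := by rw [hsmul, abs_of_pos hc]
  measurable_theta := measurable_ang
  theta_smul := ang_smul

theorem stmt11_general (μ : Measure (ℝ × ℝ))
    (hhom : ∀ B : Set (ℝ × ℝ), B ⊆ Econe → MeasurableSet B → ∀ c > (0 : ℝ),
      μ (c • B) = ENNReal.ofReal c⁻¹ * μ B)
    (Nn : ℝ × ℝ → ℝ)
    (hN_add : ∀ z w, Nn (z + w) ≤ Nn z + Nn w)
    (hN_smul : ∀ (c : ℝ) (z), Nn (c • z) = |c| * Nn z)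
    (hN_zero : ∀ z, Nn z = 0 ↔ z = 0)
    (Φ : Measure ℝ)
    (hΦ : ∀ B : Set ℝ, MeasurableSet B →
      Φ B = μ {z | z ∈ Econe ∧ 1 ≤ Nn z ∧ ang z ∈ B}) :
    ∀ x₁ x₂ : ℝ, 0 ≤ x₁ → 0 ≤ x₂ → 0 < x₁ + x₂ →
      μ {z | z ∈ Econe ∧ (1 ≤ x₁ * z.1 ∨ 1 ≤ x₂ * z.2)} =
        ∫⁻ θ in Icc 0 (π / 2),
          ENNReal.ofReal (max (x₁ * Real.sin θ) (x₂ * Real.cos θ) /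
            Nn (Real.sin θ, Real.cos θ)) ∂Φ := by
  intro x₁ x₂ _ _ _
  have hN := continuous_of_add_le_of_smul hN_add hN_smul
  have hu (θ : ℝ) : Nn (sin θ, cos θ) ≠ 0 := (hN_zero _).not.2 (sin_cos_ne_zero θ)
  have hg : Continuous fun θ ↦ max (x₁ * sin θ) (x₂ * cos θ) / Nn (sin θ, cos θ) :=
    ((continuous_const.mul continuous_sin).max (continuous_const.mul continuous_cos)).div
      (hN.comp (continuous_sin.prodMk continuous_cos)) hu
  have hset : {z | z ∈ Econe ∧ (1 ≤ x₁ * z.1 ∨ 1 ≤ x₂ * z.2)} = radialExterior Econe Nn ang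
      fun θ ↦ ENNReal.ofReal (max (x₁ * sin θ) (x₂ * cos θ) / Nn (sin θ, cos θ)) := by
    ext z
    simp only [radialExterior, mem_ofPred_eq]
    refine and_congr_right fun hz ↦ ?_
    obtain ⟨r, hr, hzr⟩ := exists_pos_smul_sin_cos_ang hz
    rw [← le_max_iff, max_mul_eq_of_eq_smul hN_smul hr hzr (hu _),
      ← ENNReal.ofReal_mul (nonneg_of_add_le_of_smul hN_add hN_smul z), ENNReal.one_le_ofReal]
  have hconc : Φ.restrict (Icc 0 (π / 2)) = Φ := by
    refine Measure.restrict_eq_self_of_ae_mem (ae_iff.2 ?_)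
    show Φ (Icc 0 (π / 2))ᶜ = 0
    rw [hΦ _ measurableSet_Icc.compl]
    exact measure_mono_null (fun z hz ↦ hz.2.2 (ang_mem_Icc hz.1)) measure_empty
  rw [hset, (isPolarCoord_econe hN hN_smul).measure_radialExterior hhom hΦ
    hg.measurable.ennreal_ofReal, hconc]

theorem stmt11 (μ : Measure (ℝ × ℝ)) (hμE : μ Econeᶜ = 0)
    (hbf : ∀ ε > (0 : ℝ), μ {z | z ∈ Econe ∧ ε ≤ max z.1 z.2} < ⊤)
    (hhom : ∀ B : Set (ℝ × ℝ), B ⊆ Econe → MeasurableSet B → ∀ c > (0 : ℝ),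
      μ (c • B) = ENNReal.ofReal c⁻¹ * μ B)
    (Nn : ℝ × ℝ → ℝ)
    (hN_add : ∀ z w, Nn (z + w) ≤ Nn z + Nn w)
    (hN_smul : ∀ (c : ℝ) (z), Nn (c • z) = |c| * Nn z)
    (hN_zero : ∀ z, Nn z = 0 ↔ z = 0)
    (hN10 : Nn (1, 0) = 1) (hN01 : Nn (0, 1) = 1)
    (Φ : Measure ℝ)
    (hΦ : ∀ B : Set ℝ, MeasurableSet B →
      Φ B = μ {z | z ∈ Econe ∧ 1 ≤ Nn z ∧ ang z ∈ B}) :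
    ∀ x₁ x₂ : ℝ, 0 ≤ x₁ → 0 ≤ x₂ → 0 < x₁ + x₂ →
      μ {z | z ∈ Econe ∧ (1 ≤ x₁ * z.1 ∨ 1 ≤ x₂ * z.2)} =
        ∫⁻ θ in Icc 0 (π / 2),
          ENNReal.ofReal (max (x₁ * Real.sin θ) (x₂ * Real.cos θ) /
            Nn (Real.sin θ, Real.cos θ)) ∂Φ :=
  stmt11_general μ hhom Nn hN_add hN_smul hN_zero Φ hΦ
end
end

section
/- Let H be a finite Borel measure on [0,1] satisfying the moment constraints ∫_{[0,1]} w H(dw) = 1 and ∫_{[0,1]} (1−w) H(dw) = 1, and define the Pickands dependence function A(v) = ∫_{[0,1]} max{w(1−v), (1−w)v} H(dw) for v ∈ [0,1]. Then for every v ∈ [0,1], A(v) = 1 − v + ∫₀^v H([0,w]) dw. -/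
open MeasureTheory Set Real Filter Topology
open scoped ENNReal

/-! Since `(1 - w) v - w (1 - v) = v - w`, the integrand is `w (1 - v) + (v - w)⁺`. The first
moment condition turns the first term into `1 - v`, and Tonelli on `{(w, u) | w ≤ u ≤ v}` turns
`∫ (v - w)⁺ H(dw)` into `∫_{u ≤ v} H((-∞, u]) du`, which is the stated integral because `H` lives
on `[0, 1]`. -/

lemma max_mul_one_sub_eq_add_max_sub (v w : ℝ) :
    max (w * (1 - v)) ((1 - w) * v) = w * (1 - v) + max (v - w) 0 := by
  rw [show (1 - w) * v = w * (1 - v) + (v - w) by ring, max_comm (v - w),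
    ← max_add_add_left, add_zero]

lemma ofReal_max_mul_one_sub {v w : ℝ} (hv : v ≤ 1) (hw : 0 ≤ w) :
    ENNReal.ofReal (max (w * (1 - v)) ((1 - w) * v))
      = ENNReal.ofReal w * ENNReal.ofReal (1 - v) + ENNReal.ofReal (v - w) := by
  rw [max_mul_one_sub_eq_add_max_sub,
    ENNReal.ofReal_add (mul_nonneg hw (sub_nonneg.2 hv)) (le_max_right _ _),
    ENNReal.ofReal_mul hw, ENNReal.ofReal_max, ENNReal.ofReal_zero, max_eq_left zero_le]

lemma lintegral_ofReal_sub_eq_setLIntegral_measure_Iic (μ : Measure ℝ) [SFinite μ] (v : ℝ) :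
    ∫⁻ w, ENNReal.ofReal (v - w) ∂μ = ∫⁻ u in Iic v, μ (Iic u) := by
  have hs : MeasurableSet {p : ℝ × ℝ | p.1 ≤ p.2} := measurableSet_le measurable_fst measurable_snd
  calc ∫⁻ w, ENNReal.ofReal (v - w) ∂μ
      = ∫⁻ w, volume.restrict (Iic v) (Ici w) ∂μ := lintegral_congr fun w => by
        rw [Measure.restrict_apply measurableSet_Ici, Ici_inter_Iic, Real.volume_Icc]
    _ = (μ.prod (volume.restrict (Iic v))) {p | p.1 ≤ p.2} := (Measure.prod_apply hs).symm
    _ = ∫⁻ u in Iic v, μ (Iic u) := Measure.prod_apply_symm hs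

lemma measure_Iic_eq_measure_Icc {μ : Measure ℝ} {a : ℝ} (ha : μ (Iio a) = 0) (u : ℝ) :
    μ (Iic u) = μ (Icc a u) := by
  rw [← measure_sdiff_null ha, sdiff_eq, compl_Iio, inter_comm, Ici_inter_Iic]

lemma setLIntegral_measure_Iic_eq {μ : Measure ℝ} {a : ℝ} (ha : μ (Iio a) = 0) (v : ℝ) :
    ∫⁻ u in Iic v, μ (Iic u) = ∫⁻ u in Icc a v, μ (Icc a u) := by
  have hsupp : Function.support (fun u => μ (Icc a u)) ⊆ Ici a :=
    Function.support_subset_iff'.2 fun u hu => by rw [Icc_eq_empty hu, measure_empty]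
  rw [← Ici_inter_Iic, ← Measure.restrict_restrict measurableSet_Ici,
    setLIntegral_eq_of_support_subset hsupp]
  exact lintegral_congr fun u => measure_Iic_eq_measure_Icc ha u

lemma lintegral_ofReal_max_mul_one_sub {H : Measure ℝ} [SFinite H] (h0 : H (Iio 0) = 0)
    (hm : ∫⁻ w, ENNReal.ofReal w ∂H = 1) {v : ℝ} (hv : v ≤ 1) :
    ∫⁻ w, ENNReal.ofReal (max (w * (1 - v)) ((1 - w) * v)) ∂H
      = ENNReal.ofReal (1 - v) + ∫⁻ u in Icc 0 v, H (Icc 0 u) := by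
  have hnonneg : ∀ᵐ w ∂H, 0 ≤ w := ae_iff.2 (measure_mono_null (fun _ hw => not_le.1 hw) h0)
  calc ∫⁻ w, ENNReal.ofReal (max (w * (1 - v)) ((1 - w) * v)) ∂H
      = ∫⁻ w, ENNReal.ofReal w * ENNReal.ofReal (1 - v) + ENNReal.ofReal (v - w) ∂H :=
        lintegral_congr_ae (hnonneg.mono fun w hw => ofReal_max_mul_one_sub hv hw)
    _ = (∫⁻ w, ENNReal.ofReal w ∂H) * ENNReal.ofReal (1 - v)
          + ∫⁻ w, ENNReal.ofReal (v - w) ∂H := by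
        rw [lintegral_add_right _ (by fun_prop), lintegral_mul_const _ (by fun_prop)]
    _ = ENNReal.ofReal (1 - v) + ∫⁻ u in Icc 0 v, H (Icc 0 u) := by
        rw [hm, one_mul, lintegral_ofReal_sub_eq_setLIntegral_measure_Iic,
          setLIntegral_measure_Iic_eq h0]

section FiniteMeasure

variable (μ : Measure ℝ) [IsFiniteMeasure μ] (a v : ℝ)

lemma setLIntegral_measure_Icc_ne_top : ∫⁻ u in Icc a v, μ (Icc a u) ≠ ∞ :=
  (setLIntegral_lt_top_of_le_nnreal measure_Icc_lt_top.ne ⟨measureUnivNNReal μ, fun _ _ =>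
    (measure_mono (subset_univ _)).trans (coe_measureUnivNNReal μ).ge⟩).ne

lemma setIntegral_toReal_measure_Icc :
    ∫ u in Icc a v, (μ (Icc a u)).toReal = (∫⁻ u in Icc a v, μ (Icc a u)).toReal := by
  have hmono : Monotone fun u => μ (Icc a u) := fun _ _ h => measure_mono (Icc_subset_Icc_right h)
  exact integral_toReal hmono.measurable.aemeasurable (ae_of_all _ fun _ => measure_lt_top μ _)

end FiniteMeasure

theorem stmt12_general (H : Measure ℝ) [IsFiniteMeasure H]
    (hsupp : H (Icc (0 : ℝ) 1)ᶜ = 0)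
    (hm1 : ∫⁻ w, ENNReal.ofReal w ∂H = 1)
    (A : ℝ → ℝ)
    (hA : ∀ v, A v =
      (∫⁻ w, ENNReal.ofReal (max (w * (1 - v)) ((1 - w) * v)) ∂H).toReal) :
    ∀ v ∈ Icc (0 : ℝ) 1,
      A v = 1 - v + ∫ w in Icc (0 : ℝ) v, (H (Icc 0 w)).toReal := by
  rintro v ⟨-, hv⟩
  have hIio : Iio (0 : ℝ) ⊆ (Icc 0 1)ᶜ := fun _ hw hmem => not_le.2 hw hmem.1
  have h0 : H (Iio 0) = 0 := measure_mono_null hIio hsupp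
  rw [hA, lintegral_ofReal_max_mul_one_sub h0 hm1 hv,
    ENNReal.toReal_add ENNReal.ofReal_ne_top (setLIntegral_measure_Icc_ne_top H 0 v),
    ENNReal.toReal_ofReal (sub_nonneg.2 hv), setIntegral_toReal_measure_Icc]

theorem stmt12 (H : Measure ℝ) [IsFiniteMeasure H]
    (hsupp : H (Icc (0 : ℝ) 1)ᶜ = 0)
    (hm1 : ∫⁻ w, ENNReal.ofReal w ∂H = 1)
    (hm2 : ∫⁻ w, ENNReal.ofReal (1 - w) ∂H = 1)
    (A : ℝ → ℝ)
    (hA : ∀ v, A v =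
      (∫⁻ w, ENNReal.ofReal (max (w * (1 - v)) ((1 - w) * v)) ∂H).toReal) :
    ∀ v ∈ Icc (0 : ℝ) 1,
      A v = 1 - v + ∫ w in Icc (0 : ℝ) v, (H (Icc 0 w)).toReal :=
  stmt12_general H hsupp hm1 A hA
end

section
/- Let (X,Y) be a random vector with the bivariate Cauchy density f(x,y) = (2/π)(1 + x² + y²)^{−3/2} on (0,∞)². Then both marginal distribution functions equal F(x) = (2/π)·arctan(x), and for all x, y ∈ (0,∞): lim_{t↓0} t^{−1}·Pr[1 − F(X) ≤ tx, 1 − F(Y) ≤ ty] = x + y − (x² + y²)^{1/2}. -/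
/-!
Integrating the density first in `y` and then in `x` gives the joint survival function
`P(X > a, Y > b) = (2/π) (π/2 - arctan a - arctan b + arctan (a b / √(1 + a² + b²)))`,
and `b = 0` gives the marginals. The event `{1 - F(X) ≤ t x, 1 - F(Y) ≤ t y}` is
`{X ≥ 1/u, Y ≥ 1/v}` with `u = tan (π t x / 2)`, `v = tan (π t y / 2)`, and in these variables
the survival function becomes `(2/π) (arctan u + arctan v - arctan √(u² + v² + u² v²))`,
that is `t x + t y - (2/π) arctan √(u² + v² + u² v²)`. Since `u / t → π x / 2`, `v / t → π y / 2`
and `arctan w ∼ w` at `0`, dividing by `t` gives the limit `x + y - √(x² + y²)`.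
-/

open MeasureTheory Set Real Filter Topology
open scoped ENNReal

noncomputable section

lemma tendsto_div_sqrt_add_sq_atTop (c : ℝ) :
    Tendsto (fun y : ℝ => y / √(c + y ^ 2)) atTop (𝓝 1) := by
  have h : Tendsto (fun y : ℝ => (√(c / y ^ 2 + 1))⁻¹) atTop (𝓝 1) := by
    have hc : Tendsto (fun y : ℝ => c / y ^ 2 + 1) atTop (𝓝 (0 + 1)) :=
      (tendsto_const_nhds.div_atTop (tendsto_pow_atTop two_ne_zero)).add_const 1
    simpa using (hc.sqrt.inv₀ (by simp))
  refine h.congr' ?_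
  filter_upwards [eventually_gt_atTop 0,
    (tendsto_pow_atTop (α := ℝ) two_ne_zero).eventually_gt_atTop (-c)] with y hy hyc
  have hcy : 0 < c + y ^ 2 := by linarith
  rw [show c / y ^ 2 + 1 = (c + y ^ 2) / y ^ 2 by field_simp,
    Real.sqrt_div hcy.le, Real.sqrt_sq hy.le, inv_div]

lemma hasDerivAt_div_mul_sqrt_add_sq {c : ℝ} (hc : 0 < c) (y : ℝ) :
    HasDerivAt (fun y : ℝ => y / (c * √(c + y ^ 2))) ((c + y ^ 2) ^ (-(3 : ℝ) / 2)) y := by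
  have hcy : 0 < c + y ^ 2 := by positivity
  have hs : √(c + y ^ 2) ^ 2 = c + y ^ 2 := Real.sq_sqrt hcy.le
  have hsqrt : HasDerivAt (fun y : ℝ => √(c + y ^ 2)) (y / √(c + y ^ 2)) y := by
    convert ((hasDerivAt_pow 2 y).const_add c).sqrt hcy.ne' using 1
    field_simp
    norm_num [mul_comm]
  have hpow : (c + y ^ 2) ^ (-(3 : ℝ) / 2) = (√(c + y ^ 2) ^ 3)⁻¹ := by
    rw [show -(3 : ℝ) / 2 = -(1 / 2 * (3 : ℕ)) by norm_num, Real.rpow_neg hcy.le,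
      Real.rpow_mul hcy.le, Real.rpow_natCast, Real.sqrt_eq_rpow]
  refine ((hasDerivAt_id y).div (hsqrt.const_mul c) (by positivity)).congr_deriv ?_
  rw [hpow]
  field_simp
  simp only [id_eq]
  linear_combination hs

lemma tendsto_div_mul_sqrt_add_sq_atTop (c : ℝ) :
    Tendsto (fun y : ℝ => y / (c * √(c + y ^ 2))) atTop (𝓝 (1 / c)) := by
  convert (tendsto_div_sqrt_add_sq_atTop c).div_const c using 2 with y
  rw [div_div, mul_comm]

lemma integrableOn_Ioi_add_sq_rpow {c : ℝ} (hc : 0 < c) (b : ℝ) :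
    IntegrableOn (fun y : ℝ => (c + y ^ 2) ^ (-(3 : ℝ) / 2)) (Ioi b) :=
  integrableOn_Ioi_deriv_of_nonneg' (fun y _ => hasDerivAt_div_mul_sqrt_add_sq hc y)
    (fun y _ => by positivity) (tendsto_div_mul_sqrt_add_sq_atTop c)

lemma integral_Ioi_add_sq_rpow {c : ℝ} (hc : 0 < c) (b : ℝ) :
    ∫ y in Ioi b, (c + y ^ 2) ^ (-(3 : ℝ) / 2) = 1 / c - b / (c * √(c + b ^ 2)) :=
  integral_Ioi_of_hasDerivAt_of_tendsto' (fun y _ => hasDerivAt_div_mul_sqrt_add_sq hc y)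
    (integrableOn_Ioi_add_sq_rpow hc b) (tendsto_div_mul_sqrt_add_sq_atTop c)

lemma hasDerivAt_arctan_sub_arctan_mul_div_sqrt (b x : ℝ) :
    HasDerivAt (fun x : ℝ => arctan x - arctan (b * x / √(1 + x ^ 2 + b ^ 2)))
      (1 / (1 + x ^ 2) - b / ((1 + x ^ 2) * √(1 + x ^ 2 + b ^ 2))) x := by
  have hcx : 0 < 1 + x ^ 2 + b ^ 2 := by positivity
  have hs : √(1 + x ^ 2 + b ^ 2) ^ 2 = 1 + x ^ 2 + b ^ 2 := Real.sq_sqrt hcx.le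
  have hsqrt : HasDerivAt (fun x : ℝ => √(1 + x ^ 2 + b ^ 2)) (x / √(1 + x ^ 2 + b ^ 2)) x := by
    convert (((hasDerivAt_pow 2 x).const_add 1).add_const (b ^ 2)).sqrt hcx.ne' using 1
    field_simp
    norm_num [mul_comm]
  have hquot := ((hasDerivAt_id x).const_mul b).div hsqrt (by positivity)
  refine ((Real.hasDerivAt_arctan x).sub hquot.arctan).congr_deriv ?_
  have hden : 1 + (b * x / √(1 + x ^ 2 + b ^ 2)) ^ 2
      = (1 + x ^ 2 + b ^ 2 + b ^ 2 * x ^ 2) / (1 + x ^ 2 + b ^ 2) := by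
    field_simp
    rw [hs]
  simp only [Pi.div_apply, id_eq, mul_one, hden]
  field_simp
  linear_combination -(b * x ^ 2 * (1 + x ^ 2)) * hs

lemma tendsto_arctan_sub_arctan_mul_div_sqrt_atTop (b : ℝ) :
    Tendsto (fun x : ℝ => arctan x - arctan (b * x / √(1 + x ^ 2 + b ^ 2)))
      atTop (𝓝 (π / 2 - arctan b)) := by
  have hratio : Tendsto (fun x : ℝ => b * x / √(1 + x ^ 2 + b ^ 2)) atTop (𝓝 b) := by
    convert (tendsto_div_sqrt_add_sq_atTop (1 + b ^ 2)).const_mul b using 2 with x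
    · rw [mul_div_assoc, add_right_comm]
    · rw [mul_one]
  exact (tendsto_arctan_atTop.mono_right nhdsWithin_le_nhds).sub
    ((continuous_arctan.tendsto b).comp hratio)

lemma le_sqrt_one_add_sq_add_sq (b x : ℝ) : b ≤ √(1 + x ^ 2 + b ^ 2) :=
  (le_abs_self b).trans (Real.abs_le_sqrt (by nlinarith [sq_nonneg x]))

lemma inv_one_add_sq_sub_nonneg (b x : ℝ) :
    0 ≤ 1 / (1 + x ^ 2) - b / ((1 + x ^ 2) * √(1 + x ^ 2 + b ^ 2)) := by
  rw [sub_nonneg, div_le_div_iff₀ (by positivity) (by positivity)]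
  nlinarith [le_sqrt_one_add_sq_add_sq b x, sq_nonneg x]

lemma integrableOn_Ioi_inv_one_add_sq_sub (a b : ℝ) :
    IntegrableOn (fun x : ℝ => 1 / (1 + x ^ 2) - b / ((1 + x ^ 2) * √(1 + x ^ 2 + b ^ 2)))
      (Ioi a) :=
  integrableOn_Ioi_deriv_of_nonneg' (fun x _ => hasDerivAt_arctan_sub_arctan_mul_div_sqrt b x)
    (fun x _ => inv_one_add_sq_sub_nonneg b x) (tendsto_arctan_sub_arctan_mul_div_sqrt_atTop b)

lemma integral_Ioi_inv_one_add_sq_sub (a b : ℝ) :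
    ∫ x in Ioi a, (1 / (1 + x ^ 2) - b / ((1 + x ^ 2) * √(1 + x ^ 2 + b ^ 2)))
      = π / 2 - arctan a - arctan b + arctan (a * b / √(1 + a ^ 2 + b ^ 2)) := by
  rw [integral_Ioi_of_hasDerivAt_of_tendsto'
    (fun x _ => hasDerivAt_arctan_sub_arctan_mul_div_sqrt b x)
    (integrableOn_Ioi_inv_one_add_sq_sub a b) (tendsto_arctan_sub_arctan_mul_div_sqrt_atTop b),
    mul_comm b a]
  ring

def cauchyDensity (z : ℝ × ℝ) : ℝ := 2 / π * (1 + z.1 ^ 2 + z.2 ^ 2) ^ (-(3 : ℝ) / 2)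

def cauchySurvival (a b : ℝ) : ℝ :=
  2 / π * (π / 2 - arctan a - arctan b + arctan (a * b / √(1 + a ^ 2 + b ^ 2)))

lemma cauchySurvival_nonneg (a b : ℝ) : 0 ≤ cauchySurvival a b := by
  rw [cauchySurvival, ← integral_Ioi_inv_one_add_sq_sub]
  exact mul_nonneg (by positivity)
    (setIntegral_nonneg measurableSet_Ioi fun x _ => inv_one_add_sq_sub_nonneg b x)

lemma lintegral_cauchyDensity_Ioi (x b : ℝ) :
    ∫⁻ y in Ioi b, ENNReal.ofReal (cauchyDensity (x, y))
      = ENNReal.ofReal (2 / π * (1 / (1 + x ^ 2) - b / ((1 + x ^ 2) * √(1 + x ^ 2 + b ^ 2)))) := by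
  have hc : 0 < 1 + x ^ 2 := by positivity
  simp only [cauchyDensity]
  rw [← ofReal_integral_eq_lintegral_ofReal
      ((integrableOn_Ioi_add_sq_rpow hc b).const_mul (2 / π))
      (Eventually.of_forall fun y => by positivity),
    integral_const_mul, integral_Ioi_add_sq_rpow hc b]

lemma lintegral_cauchyDensity_Ioi_prod_Ioi (a b : ℝ) :
    ∫⁻ z in Ioi a ×ˢ Ioi b, ENNReal.ofReal (cauchyDensity z)
      = ENNReal.ofReal (cauchySurvival a b) := by
  have hmeas : Measurable fun z : ℝ × ℝ => ENNReal.ofReal (cauchyDensity z) := by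
    unfold cauchyDensity
    fun_prop
  rw [Measure.volume_eq_prod, ← Measure.prod_restrict, lintegral_prod _ hmeas.aemeasurable]
  simp only [lintegral_cauchyDensity_Ioi]
  rw [← ofReal_integral_eq_lintegral_ofReal
      ((integrableOn_Ioi_inv_one_add_sq_sub a b).const_mul _)
      (Eventually.of_forall fun x => mul_nonneg (by positivity) (inv_one_add_sq_sub_nonneg b x)),
    integral_const_mul, integral_Ioi_inv_one_add_sq_sub, cauchySurvival]

lemma tendsto_tan_mul_div (c : ℝ) : Tendsto (fun t : ℝ => tan (c * t) / t) (𝓝[≠] 0) (𝓝 c) := by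
  have h := ((Real.hasDerivAt_tan (by simp)).comp (0 : ℝ) ((hasDerivAt_id (0 : ℝ)).const_mul c))
  convert h.tendsto_slope_zero using 2 with t
  · simp [div_eq_inv_mul]
  · simp

lemma tendsto_arctan_div : Tendsto (fun w : ℝ => arctan w / w) (𝓝[≠] 0) (𝓝 1) := by
  convert (Real.hasDerivAt_arctan 0).tendsto_slope_zero using 2 with w
  · simp [div_eq_inv_mul]
  · simp

lemma tendsto_inv_mul_arctan_sqrt {u v : ℝ → ℝ} {α β : ℝ} (hα : α ≠ 0)
    (hu : Tendsto (fun t => u t / t) (𝓝[>] 0) (𝓝 α))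
    (hv : Tendsto (fun t => v t / t) (𝓝[>] 0) (𝓝 β)) :
    Tendsto (fun t => t⁻¹ * arctan √(u t ^ 2 + v t ^ 2 + u t ^ 2 * v t ^ 2)) (𝓝[>] 0)
      (𝓝 √(α ^ 2 + β ^ 2)) := by
  set W := fun t => √(u t ^ 2 + v t ^ 2 + u t ^ 2 * v t ^ 2)
  have hid : Tendsto (fun t : ℝ => t) (𝓝[>] 0) (𝓝 0) := nhdsWithin_le_nhds
  have hWt : Tendsto (fun t => W t / t) (𝓝[>] 0) (𝓝 √(α ^ 2 + β ^ 2)) := by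
    have h := (((hu.pow 2).add (hv.pow 2)).add ((hid.pow 2).mul ((hu.pow 2).mul (hv.pow 2)))).sqrt
    rw [zero_pow two_ne_zero, zero_mul, add_zero] at h
    refine h.congr' ?_
    filter_upwards [self_mem_nhdsWithin] with t (ht : 0 < t)
    rw [← Real.sqrt_sq ht.le, ← Real.sqrt_div' _ (sq_nonneg t), Real.sqrt_sq ht.le]
    congr 1
    field_simp
  have hL : 0 < √(α ^ 2 + β ^ 2) := Real.sqrt_pos.2 (by positivity)
  have hWne : ∀ᶠ t in 𝓝[>] 0, W t ≠ 0 :=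
    (hWt.eventually_ne hL.ne').mono fun t ht => (div_ne_zero_iff.1 ht).1
  have hW0 : Tendsto W (𝓝[>] 0) (𝓝[≠] 0) := by
    refine tendsto_nhdsWithin_iff.2 ⟨?_, ?_⟩
    · have h := hid.mul hWt
      rw [zero_mul] at h
      refine h.congr' ?_
      filter_upwards [self_mem_nhdsWithin] with t (ht : 0 < t)
      field_simp
    · exact hWne
  have h := (tendsto_arctan_div.comp hW0).mul hWt
  rw [one_mul] at h
  refine h.congr' ?_
  filter_upwards [hWne] with t hW
  simp only [Function.comp_apply]
  field_simp
  rfl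

lemma two_div_pi_mul_arctan_le_one (x : ℝ) : 2 / π * arctan x ≤ 1 := by
  rw [div_mul_eq_mul_div, div_le_one pi_pos]
  linarith [arctan_lt_pi_div_two x]

lemma one_sub_two_div_pi_mul_arctan_le_iff {c z : ℝ} (hc0 : 0 < c) (hc1 : c < 1) :
    1 - 2 / π * arctan z ≤ c ↔ (tan (π / 2 * c))⁻¹ ≤ z := by
  have hπ := pi_pos
  rw [← tan_pi_div_two_sub, ← arctan_le_arctan_iff (x := tan _),
    arctan_tan (by nlinarith) (by nlinarith),
    show 1 - 2 / π * arctan z = (π / 2 - arctan z) / (π / 2) by field_simp,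
    div_le_iff₀ (by positivity)]
  constructor <;> intro h <;> linarith

lemma cauchySurvival_zero_right (x : ℝ) : cauchySurvival x 0 = 1 - 2 / π * arctan x := by
  simp only [cauchySurvival, arctan_zero, mul_zero, zero_div]
  field_simp
  ring

lemma cauchySurvival_zero_left (y : ℝ) : cauchySurvival 0 y = 1 - 2 / π * arctan y := by
  simp only [cauchySurvival, arctan_zero, zero_mul, zero_div]
  field_simp
  ring

lemma cauchySurvival_inv_inv {u v : ℝ} (hu : 0 < u) (hv : 0 < v) :
    cauchySurvival u⁻¹ v⁻¹
      = 2 / π * (arctan u + arctan v - arctan √(u ^ 2 + v ^ 2 + u ^ 2 * v ^ 2)) := by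
  have hprod :
      u⁻¹ * v⁻¹ / √(1 + u⁻¹ ^ 2 + v⁻¹ ^ 2) = (√(u ^ 2 + v ^ 2 + u ^ 2 * v ^ 2))⁻¹ := by
    rw [show 1 + u⁻¹ ^ 2 + v⁻¹ ^ 2 = (u ^ 2 + v ^ 2 + u ^ 2 * v ^ 2) / (u * v) ^ 2 by
        field_simp; ring,
      Real.sqrt_div' _ (sq_nonneg _), Real.sqrt_sq (by positivity)]
    field_simp
  rw [cauchySurvival, hprod, arctan_inv_of_pos hu, arctan_inv_of_pos hv,
    arctan_inv_of_pos (Real.sqrt_pos.2 (by positivity))]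
  ring

lemma measure_le_eq_ofReal_of_measure_gt {Ω : Type*} [MeasurableSpace Ω] {P : Measure Ω}
    [IsProbabilityMeasure P] {Z : Ω → ℝ} (hZ : Measurable Z) {x p : ℝ} (hp : p ≤ 1)
    (h : P {ω | x < Z ω} = ENNReal.ofReal (1 - p)) :
    P {ω | Z ω ≤ x} = ENNReal.ofReal p := by
  have hcompl : {ω | Z ω ≤ x} = {ω | x < Z ω}ᶜ := by
    ext ω
    simp
  rw [hcompl, prob_compl_eq_one_sub (measurableSet_lt measurable_const hZ), h,
    ← ENNReal.ofReal_one, ← ENNReal.ofReal_sub _ (sub_nonneg.2 hp), sub_sub_cancel]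

section CauchyVector

variable {Ω : Type*} [MeasurableSpace Ω] {P : Measure Ω} {X Y : Ω → ℝ}
  (hdens : ∀ B : Set (ℝ × ℝ), MeasurableSet B →
    P {ω | (X ω, Y ω) ∈ B} = ∫⁻ z in B ∩ Ioi 0 ×ˢ Ioi 0, ENNReal.ofReal (cauchyDensity z))
include hdens

lemma measure_mem_prod_eq_cauchySurvival {s t : Set ℝ} {a b : ℝ} (hs : MeasurableSet s)
    (ht : MeasurableSet t) (hsa : (s ∩ Ioi 0 : Set ℝ) =ᵐ[volume] Ioi a)
    (htb : (t ∩ Ioi 0 : Set ℝ) =ᵐ[volume] Ioi b) :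
    P {ω | (X ω, Y ω) ∈ s ×ˢ t} = ENNReal.ofReal (cauchySurvival a b) := by
  have hst : (s ×ˢ t ∩ Ioi 0 ×ˢ Ioi 0 : Set (ℝ × ℝ)) =ᵐ[volume] Ioi a ×ˢ Ioi b := by
    rw [prod_inter_prod, Measure.volume_eq_prod]
    exact Measure.set_prod_ae_eq hsa htb
  rw [hdens _ (hs.prod ht), setLIntegral_congr hst, lintegral_cauchyDensity_Ioi_prod_Ioi]

lemma measure_fst_gt {x : ℝ} (hx : 0 ≤ x) :
    P {ω | x < X ω} = ENNReal.ofReal (1 - 2 / π * arctan x) := by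
  rw [← cauchySurvival_zero_right, ← measure_mem_prod_eq_cauchySurvival hdens measurableSet_Ioi
    MeasurableSet.univ (.of_eq (by rw [Ioi_inter_Ioi, max_eq_left hx])) (.of_eq (univ_inter _))]
  simp

lemma measure_snd_gt {y : ℝ} (hy : 0 ≤ y) :
    P {ω | y < Y ω} = ENNReal.ofReal (1 - 2 / π * arctan y) := by
  rw [← cauchySurvival_zero_left, ← measure_mem_prod_eq_cauchySurvival hdens MeasurableSet.univ
    measurableSet_Ioi (.of_eq (univ_inter _)) (.of_eq (by rw [Ioi_inter_Ioi, max_eq_left hy]))]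
  simp

lemma measure_le_and_le_eq_cauchySurvival {a b : ℝ} (ha : 0 < a) (hb : 0 < b) :
    P {ω | a ≤ X ω ∧ b ≤ Y ω} = ENNReal.ofReal (cauchySurvival a b) := by
  have hIci {c : ℝ} (hc : 0 < c) : (Ici c ∩ Ioi 0 : Set ℝ) =ᵐ[volume] Ioi c := by
    rw [inter_eq_left.2 (Ici_subset_Ioi.2 hc)]
    exact Ioi_ae_eq_Ici.symm
  exact measure_mem_prod_eq_cauchySurvival hdens measurableSet_Ici measurableSet_Ici
    (hIci ha) (hIci hb)

lemma toReal_measure_one_sub_cdf_le_and_le {c d : ℝ} (hc0 : 0 < c) (hc1 : c < 1) (hd0 : 0 < d)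
    (hd1 : d < 1) :
    (P {ω | 1 - 2 / π * arctan (X ω) ≤ c ∧ 1 - 2 / π * arctan (Y ω) ≤ d}).toReal
      = c + d - 2 / π * arctan √(tan (π / 2 * c) ^ 2 + tan (π / 2 * d) ^ 2
          + tan (π / 2 * c) ^ 2 * tan (π / 2 * d) ^ 2) := by
  have hπ := pi_pos
  have hθc : 0 < π / 2 * c ∧ π / 2 * c < π / 2 := ⟨by positivity, by nlinarith⟩
  have hθd : 0 < π / 2 * d ∧ π / 2 * d < π / 2 := ⟨by positivity, by nlinarith⟩
  have huc := tan_pos_of_pos_of_lt_pi_div_two hθc.1 hθc.2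
  have hud := tan_pos_of_pos_of_lt_pi_div_two hθd.1 hθd.2
  have hset : {ω | 1 - 2 / π * arctan (X ω) ≤ c ∧ 1 - 2 / π * arctan (Y ω) ≤ d}
      = {ω | (tan (π / 2 * c))⁻¹ ≤ X ω ∧ (tan (π / 2 * d))⁻¹ ≤ Y ω} := by
    ext ω
    exact and_congr (one_sub_two_div_pi_mul_arctan_le_iff hc0 hc1)
      (one_sub_two_div_pi_mul_arctan_le_iff hd0 hd1)
  rw [hset, measure_le_and_le_eq_cauchySurvival hdens (inv_pos.2 huc) (inv_pos.2 hud),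
    ENNReal.toReal_ofReal (cauchySurvival_nonneg _ _), cauchySurvival_inv_inv huc hud,
    arctan_tan (by linarith) hθc.2, arctan_tan (by linarith) hθd.2]
  field_simp

end CauchyVector

theorem stmt14 {Ω : Type*} [MeasurableSpace Ω] (P : Measure Ω) [IsProbabilityMeasure P]
    (X Y : Ω → ℝ) (hX : Measurable X) (hY : Measurable Y)
    (hdens : ∀ B : Set (ℝ × ℝ), MeasurableSet B →
      P {ω | (X ω, Y ω) ∈ B} =
        ∫⁻ z in B ∩ Ioi 0 ×ˢ Ioi 0,
          ENNReal.ofReal (2 / π * (1 + z.1 ^ 2 + z.2 ^ 2) ^ (-(3 : ℝ) / 2)) ∂volume) :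
    (∀ x > (0 : ℝ),
      P {ω | X ω ≤ x} = ENNReal.ofReal (2 / π * Real.arctan x) ∧
      P {ω | Y ω ≤ x} = ENNReal.ofReal (2 / π * Real.arctan x)) ∧
    ∀ x > (0 : ℝ), ∀ y > (0 : ℝ),
      Tendsto (fun t : ℝ =>
          t⁻¹ * (P {ω | 1 - 2 / π * Real.arctan (X ω) ≤ t * x ∧
                        1 - 2 / π * Real.arctan (Y ω) ≤ t * y}).toReal)
        (𝓝[>] 0) (𝓝 (x + y - Real.sqrt (x ^ 2 + y ^ 2))) := by
  refine ⟨fun x hx => ⟨?_, ?_⟩, fun x hx y hy => ?_⟩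
  · exact measure_le_eq_ofReal_of_measure_gt hX (two_div_pi_mul_arctan_le_one x)
      (measure_fst_gt hdens hx.le)
  · exact measure_le_eq_ofReal_of_measure_gt hY (two_div_pi_mul_arctan_le_one x)
      (measure_snd_gt hdens hx.le)
  have hπ := pi_pos
  have hlim := tendsto_inv_mul_arctan_sqrt (by positivity)
    ((tendsto_tan_mul_div (π / 2 * x)).mono_left (nhdsGT_le_nhdsNE 0))
    ((tendsto_tan_mul_div (π / 2 * y)).mono_left (nhdsGT_le_nhdsNE 0))
  have hvalue :
      x + y - 2 / π * √((π / 2 * x) ^ 2 + (π / 2 * y) ^ 2) = x + y - √(x ^ 2 + y ^ 2) := by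
    rw [show (π / 2 * x) ^ 2 + (π / 2 * y) ^ 2 = (π / 2) ^ 2 * (x ^ 2 + y ^ 2) by ring,
      Real.sqrt_mul (sq_nonneg _), Real.sqrt_sq (by positivity)]
    field_simp
  rw [← hvalue]
  refine (tendsto_const_nhds.sub (hlim.const_mul (2 / π))).congr' ?_
  filter_upwards [Ioo_mem_nhdsGT (lt_min (inv_pos.2 hx) (inv_pos.2 hy))] with t ⟨ht0, ht⟩
  have htx : t * x < 1 := by rw [← lt_div_iff₀ hx, one_div]; exact ht.trans_le (min_le_left _ _)
  have hty : t * y < 1 := by rw [← lt_div_iff₀ hy, one_div]; exact ht.trans_le (min_le_right _ _)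
  rw [toReal_measure_one_sub_cdf_le_and_le hdens (mul_pos ht0 hx) htx (mul_pos ht0 hy) hty]
  field_simp
end
end
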